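/- arXiv:2501.13615 — 8 statements merged into one kernel-verified Lean document; each statement's English description precedes it below -/
import Mathlib

section
/- The pseudometric space (𝒫(ℕ), d_{𝔟*}) is not complete, where 𝔟* is the upper Buck density: there exists a d_{𝔟*}-Cauchy sequence of subsets of ℕ that does not d_{𝔟*}-converge to any subset of ℕ. -/
open Filter Topology

/-- The upper asymptotic density `d*(A) = limsup_n |A ∩ {0,…,n-1}| / n`. -/
noncomputable def upperAsymptoticDensity (A : Set ℕ) : ℝ :=
  Filter.limsup (fun n : ℕ => ((A ∩ Set.Iio n).ncard : ℝ) / n) Filter.atTop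

/-- `X` is a finite union of infinite arithmetic progressions `k·ℕ + h` (`k ≠ 0`). -/
def IsFinUnionAP (X : Set ℕ) : Prop :=
  ∃ s : Finset (ℕ × ℕ), (∀ p ∈ s, p.1 ≠ 0) ∧
    X = ⋃ p ∈ s, Set.range (fun n : ℕ => p.1 * n + p.2)

/-- The upper Buck density `𝔟*(A) = inf { d*(X) : X ∈ 𝒜, A ⊆ X }`. -/
noncomputable def upperBuckDensity (A : Set ℕ) : ℝ :=
  sInf {x : ℝ | ∃ X : Set ℕ, IsFinUnionAP X ∧ A ⊆ X ∧ x = upperAsymptoticDensity X}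

section Aux

open Finset

namespace BuckNC


/-- cumulative block widths -/
def TT (n : ℕ) : ℕ := ∑ j ∈ Finset.range n, (j + 3)

lemma TT_succ (n : ℕ) : TT (n+1) = TT n + (n + 3) := Finset.sum_range_succ _ n

lemma TT_mono : Monotone TT := by
  intro a b hab
  exact Finset.sum_le_sum_of_subset (Finset.range_subset_range.2 hab)

lemma le_TT (n : ℕ) : n ≤ TT n := by
  induction n with
  | zero => simp [TT]
  | succ n ih => rw [TT_succ]; omega

lemma TT_ge (n : ℕ) (hn : 1 ≤ n) : n + 2 ≤ TT n := by
  obtain ⟨k, rfl⟩ := Nat.exists_eq_add_of_le hn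
  rw [add_comm 1 k, TT_succ]
  have := le_TT k
  omega

/-- x is "good" at block j if block j of x is nonzero -/
def goodAt (j x : ℕ) : Prop := x / 2 ^ TT j % 2 ^ (j + 3) ≠ 0

instance (j x : ℕ) : Decidable (goodAt j x) := by unfold goodAt; infer_instance

def UU (n : ℕ) : Set ℕ := {x | ∀ j < n, goodAt j x}

/-- block value depends only on x mod Mo, when D*B ∣ Mo. -/
lemma block_mod {D B Mo x y : ℕ} (hD : 0 < D) (h : D * B ∣ Mo) (hxy : x % Mo = y % Mo) :
    x / D % B = y / D % B := by
  obtain ⟨k, hk⟩ := h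
  subst hk
  have key : ∀ z : ℕ, z / D % B = (z % (D * B * k)) / D % B := by
    intro z
    conv_lhs => rw [← Nat.mod_add_div z (D * B * k)]
    have : z % (D * B * k) + D * B * k * (z / (D * B * k))
        = z % (D * B * k) + D * (B * (k * (z / (D * B * k)))) := by ring
    rw [this, Nat.add_mul_div_left _ _ hD, Nat.add_mul_mod_self_left]
  rw [key x, key y, hxy]

lemma goodAt_mod {j Mo x y : ℕ} (h : 2 ^ TT (j+1) ∣ Mo) (hxy : x % Mo = y % Mo) :
    (goodAt j x ↔ goodAt j y) := by
  unfold goodAt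
  rw [block_mod (pow_pos two_pos _) (by rwa [← pow_add, ← TT_succ]) hxy]



lemma card_zeroblock_le (C D B : ℕ) (hD : 0 < D) (hB : 0 < B) (h : D * B ∣ C) :
    ((Finset.range C).filter (fun x => x / D % B = 0)).card ≤ C / B := by
  obtain ⟨e, he⟩ := h
  have hCB : C / B = D * e := by subst he; rw [Nat.mul_comm D B, Nat.mul_assoc, Nat.mul_div_cancel_left _ hB]
  have hrec : ∀ x ∈ (Finset.range C).filter (fun x => x / D % B = 0),
      x = D * B * (x / (D * B)) + x % D := by
    intro x hx
    simp only [Finset.mem_filter, Finset.mem_range] at hx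
    conv_lhs => rw [← Nat.div_add_mod x D]
    conv_lhs => rw [← Nat.div_add_mod (x / D) B, hx.2, Nat.add_zero, Nat.div_div_eq_div_mul]
    ring
  apply le_trans (Finset.card_le_card_of_injOn (fun x => D * (x / (D * B)) + x % D) ?_ ?_)
    (le_of_eq (Finset.card_range _))
  · intro x hx
    simp only [Finset.mem_coe, Finset.mem_filter, Finset.mem_range] at hx ⊢
    have hq : x / (D * B) < e := by
      apply Nat.div_lt_of_lt_mul
      calc x < C := hx.1
        _ = D * B * e := he
    calc D * (x / (D * B)) + x % D < D * (x / (D * B)) + D := by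
          have := Nat.mod_lt x hD; omega
      _ = D * (x / (D * B) + 1) := by ring
      _ ≤ D * e := Nat.mul_le_mul_left D hq
      _ = C / B := hCB.symm
  · intro x hx y hy hxy
    have hx' := hrec x hx
    have hy' := hrec y hy
    simp only at hxy
    have h1 : x % D = y % D := by
      have : (D * (x / (D * B)) + x % D) % D = (D * (y / (D * B)) + y % D) % D := by rw [hxy]
      simpa [Nat.mul_add_mod, Nat.mod_mod_of_dvd, Nat.mod_eq_of_lt (Nat.mod_lt x hD),
        Nat.mod_eq_of_lt (Nat.mod_lt y hD)] using this
    have h2 : x / (D * B) = y / (D * B) := by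
      have : (D * (x / (D * B)) + x % D) / D = (D * (y / (D * B)) + y % D) / D := by rw [hxy]
      rwa [Nat.mul_add_div hD, Nat.mul_add_div hD,
        Nat.div_eq_of_lt (Nat.mod_lt x hD), Nat.div_eq_of_lt (Nat.mod_lt y hD),
        Nat.add_zero, Nat.add_zero] at this
    rw [hx', hy', h1, h2]

lemma sum_pow_div_le (C m n : ℕ) (hmn : m ≤ n) (hdvd : ∀ j ≤ n, 2 ^ (j + 2) ∣ C) :
    (∑ j ∈ Finset.Ico m n, C / 2 ^ (j + 3)) + C / 2 ^ (n + 2) ≤ C / 2 ^ (m + 2) := by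
  induction n with
  | zero => interval_cases m; simp
  | succ n ih =>
    rcases Nat.eq_or_lt_of_le hmn with rfl | hlt
    · simp
    · have hmn' : m ≤ n := Nat.lt_succ_iff.mp hlt
      have step : C / 2 ^ (n + 3) + C / 2 ^ (n + 3) = C / 2 ^ (n + 2) := by
        obtain ⟨e, he⟩ := hdvd (n + 1) (le_refl _)
        subst he
        have h1 : (2:ℕ) ^ (n + 1 + 2) = 2 ^ (n + 2) * 2 := by ring
        rw [h1]
        rw [Nat.mul_div_cancel_left e (by positivity : 0 < 2 ^ (n+2) * 2)]
        rw [Nat.mul_assoc, Nat.mul_div_cancel_left (2 * e) (by positivity : (0:ℕ) < 2 ^ (n+2))]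
        omega
      have ih' := ih hmn' (fun j hj => hdvd j (Nat.le_succ_of_le hj))
      rw [Finset.sum_Ico_succ_top hmn']
      have hEq : C / 2 ^ (n + 1 + 2) = C / 2 ^ (n + 3) := by
        rw [show n + 1 + 2 = n + 3 from rfl]
      omega



lemma Iio_eq_range (n : ℕ) : Set.Iio n = ↑(Finset.range n) := by
  ext x; simp

lemma ncard_inter_le (X : Set ℕ) (n : ℕ) : (X ∩ Set.Iio n).ncard ≤ n := by
  calc (X ∩ Set.Iio n).ncard ≤ (Set.Iio n).ncard :=
        Set.ncard_le_ncard Set.inter_subset_right (Set.finite_Iio n)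
    _ = n := by rw [Iio_eq_range, Set.ncard_coe_finset, Finset.card_range]

lemma f_nonneg (X : Set ℕ) (n : ℕ) : 0 ≤ ((X ∩ Set.Iio n).ncard : ℝ) / n := by positivity

lemma f_le_one (X : Set ℕ) (n : ℕ) : ((X ∩ Set.Iio n).ncard : ℝ) / n ≤ 1 := by
  rcases Nat.eq_zero_or_pos n with rfl | hn
  · simp
  · rw [div_le_one (by positivity)]
    exact_mod_cast ncard_inter_le X n

lemma f_bddAbove (X : Set ℕ) :
    IsBoundedUnder (· ≤ ·) atTop (fun n : ℕ => ((X ∩ Set.Iio n).ncard : ℝ) / n) :=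
  Filter.isBoundedUnder_of ⟨1, f_le_one X⟩

lemma density_nonneg (X : Set ℕ) : 0 ≤ upperAsymptoticDensity X :=
  le_limsup_of_frequently_le (Filter.Frequently.of_forall (f_nonneg X)) (f_bddAbove X)

/-- upper bound for the density of a periodic set -/
lemma density_UB (K : ℕ) (hK : K ≠ 0) (R : Finset ℕ) :
    upperAsymptoticDensity {x : ℕ | x % K ∈ R} ≤ (R.card : ℝ) / K := by
  have hK0 : 0 < K := Nat.pos_of_ne_zero hK
  apply le_of_forall_pos_le_add
  intro ε hε
  apply limsup_le_of_le (isCoboundedUnder_le_of_le atTop (f_nonneg _))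
  obtain ⟨N₀, hN₀⟩ := exists_nat_ge ((R.card : ℝ) / ε)
  filter_upwards [eventually_ge_atTop (N₀ + 1)] with N hN
  have hNpos : 0 < N := by omega
  -- counting
  have hcount : ({x : ℕ | x % K ∈ R} ∩ Set.Iio N).ncard ≤ R.card * (N / K + 1) := by
    have hset : {x : ℕ | x % K ∈ R} ∩ Set.Iio N
        = ↑((Finset.range N).filter (fun x => x % K ∈ R)) := by
      ext x; simp [and_comm]
    rw [hset, Set.ncard_coe_finset]
    calc ((Finset.range N).filter (fun x => x % K ∈ R)).card
        ≤ (R ×ˢ Finset.range (N / K + 1)).card := by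
          apply Finset.card_le_card_of_injOn (fun x => (x % K, x / K))
          · intro x hx
            simp only [Finset.mem_coe, Finset.mem_filter, Finset.mem_range] at hx
            simp only [Finset.mem_coe, Finset.mem_product, Finset.mem_range]
            exact ⟨hx.2, by
              have : x / K ≤ N / K := Nat.div_le_div_right (le_of_lt hx.1)
              omega⟩
          · intro x _ y _ hxy
            simp only [Prod.mk.injEq] at hxy
            conv_lhs => rw [← Nat.div_add_mod x K]
            conv_rhs => rw [← Nat.div_add_mod y K]
            rw [hxy.1, hxy.2]
      _ = R.card * (N / K + 1) := by rw [Finset.card_product, Finset.card_range]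
  have h1 : ((({x : ℕ | x % K ∈ R} ∩ Set.Iio N).ncard : ℝ)) ≤ (R.card : ℝ) * (↑(N / K) + 1) := by
    exact_mod_cast hcount
  have h2 : ((N / K : ℕ) : ℝ) ≤ (N : ℝ) / K := Nat.cast_div_le
  have hNR : (R.card : ℝ) ≤ ε * N := by
    have : ((R.card : ℝ) / ε) ≤ N := le_trans hN₀ (by exact_mod_cast (by omega : N₀ ≤ N))
    calc (R.card : ℝ) = (R.card / ε) * ε := by field_simp
      _ ≤ N * ε := by apply mul_le_mul_of_nonneg_right this (le_of_lt hε)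
      _ = ε * N := by ring
  rw [div_le_iff₀ (by positivity : (0:ℝ) < N)]
  calc ((({x : ℕ | x % K ∈ R} ∩ Set.Iio N).ncard : ℝ))
      ≤ (R.card : ℝ) * (↑(N / K) + 1) := h1
    _ ≤ (R.card : ℝ) * ((N : ℝ) / K + 1) := by
        apply mul_le_mul_of_nonneg_left (by linarith) (by positivity)
    _ = (R.card : ℝ) / K * N + R.card := by field_simp
    _ ≤ (R.card : ℝ) / K * N + ε * N := by linarith
    _ = ((R.card : ℝ) / K + ε) * N := by ring

/-- lower bound: if `X` contains all sufficiently large numbers with residue in `R'`,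
then its upper density is at least `|R'|/K`. -/
lemma density_LB (K : ℕ) (hK : K ≠ 0) (R' : Finset ℕ) (hR : R' ⊆ Finset.range K) (H : ℕ)
    (X : Set ℕ) (hcov : ∀ y : ℕ, y % K ∈ R' → H ≤ y → y ∈ X) :
    (R'.card : ℝ) / K ≤ upperAsymptoticDensity X := by
  have hK0 : 0 < K := Nat.pos_of_ne_zero hK
  have hRK : R'.card ≤ K := by
    calc R'.card ≤ (Finset.range K).card := Finset.card_le_card hR
      _ = K := Finset.card_range K
  set c : ℕ := H / K + 1 with hc
  apply le_of_forall_pos_le_add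
  intro ε hε
  rw [← sub_le_iff_le_add]
  apply le_limsup_of_frequently_le ?_ (f_bddAbove X)
  rw [Filter.frequently_atTop]
  intro a
  obtain ⟨t₁, ht₁⟩ := exists_nat_ge ((c : ℝ) / ε)
  set t : ℕ := max a (max c t₁) + 1 with ht
  have htpos : 0 < t := by omega
  have hct : c ≤ t := by omega
  have htt1 : t₁ ≤ t := by omega
  refine ⟨K * t, ?_, ?_⟩
  · calc a ≤ t := by omega
      _ ≤ K * t := Nat.le_mul_of_pos_left t hK0
  -- counting lower bound
  have hcount : R'.card * (t - c) ≤ (X ∩ Set.Iio (K * t)).ncard := by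
    classical
    have himg : ∀ p ∈ R' ×ˢ Finset.range (t - c), ((p.2 + c) * K + p.1) ∈ X ∩ Set.Iio (K * t) := by
      rintro ⟨ρ, q⟩ hp
      simp only [Finset.mem_product, Finset.mem_range] at hp
      have hρK : ρ < K := Finset.mem_range.mp (hR hp.1)
      have hmod : ((q + c) * K + ρ) % K = ρ := by
        rw [mul_comm, Nat.mul_add_mod, Nat.mod_eq_of_lt hρK]
      constructor
      · apply hcov _ (by rw [hmod]; exact hp.1)
        have hHc : H < c * K := by
          have h1 := Nat.div_add_mod H K
          have h2 := Nat.mod_lt H hK0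
          have h3 : c * K = K * (H / K) + K := by rw [hc]; ring
          omega
        calc H ≤ c * K := le_of_lt hHc
          _ ≤ (q + c) * K := Nat.mul_le_mul_right K (by omega)
          _ ≤ (q + c) * K + ρ := Nat.le_add_right _ _
      · simp only [Set.mem_Iio]
        have hq : q + c ≤ t - 1 := by omega
        calc (q + c) * K + ρ < (q + c) * K + K := by omega
          _ = (q + c + 1) * K := by ring
          _ ≤ t * K := Nat.mul_le_mul_right K (by omega)
          _ = K * t := by ring
    have hinj : Set.InjOn (fun p : ℕ × ℕ => (p.2 + c) * K + p.1) ↑(R' ×ˢ Finset.range (t - c)) := by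
      rintro ⟨ρ₁, q₁⟩ hp₁ ⟨ρ₂, q₂⟩ hp₂ hval
      simp only [Finset.coe_product, Set.mem_prod] at hp₁ hp₂
      have hρ₁ : ρ₁ < K := Finset.mem_range.mp (hR hp₁.1)
      have hρ₂ : ρ₂ < K := Finset.mem_range.mp (hR hp₂.1)
      simp only at hval
      have key : ∀ q ρ : ℕ, ρ < K →
          ((q + c) * K + ρ) % K = ρ ∧ ((q + c) * K + ρ) / K = q + c := by
        intro q ρ h
        constructor
        · rw [mul_comm, Nat.mul_add_mod, Nat.mod_eq_of_lt h]
        · rw [mul_comm, Nat.mul_add_div hK0, Nat.div_eq_of_lt h, Nat.add_zero]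
      have h1 : ρ₁ = ρ₂ := by
        have e := congrArg (· % K) hval
        rwa [(key q₁ ρ₁ hρ₁).1, (key q₂ ρ₂ hρ₂).1] at e
      have h2 : q₁ = q₂ := by
        have e := congrArg (· / K) hval
        rw [(key q₁ ρ₁ hρ₁).2, (key q₂ ρ₂ hρ₂).2] at e
        omega
      rw [Prod.mk.injEq]; exact ⟨h1, h2⟩
    calc R'.card * (t - c) = (R' ×ˢ Finset.range (t - c)).card := by
          rw [Finset.card_product, Finset.card_range]
      _ = ((R' ×ˢ Finset.range (t - c)).image (fun p : ℕ × ℕ => (p.2 + c) * K + p.1)).card := by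
          rw [Finset.card_image_of_injOn hinj]
      _ ≤ (X ∩ Set.Iio (K * t)).ncard := by
          rw [← Set.ncard_coe_finset]
          apply Set.ncard_le_ncard
          · intro y hy
            simp only [Finset.coe_image, Set.mem_image] at hy
            obtain ⟨p, hp, rfl⟩ := hy
            exact himg p (by exact_mod_cast hp)
          · exact Set.Finite.subset (Set.finite_Iio (K * t)) Set.inter_subset_right
  -- real arithmetic
  have hcast : ((R'.card * (t - c) : ℕ) : ℝ) = (R'.card : ℝ) * ((t : ℝ) - c) := by
    push_cast [Nat.cast_sub hct]; ring
  have hcε : (c : ℝ) ≤ ε * t := by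
    have h1 : ((c : ℝ) / ε) ≤ t₁ := ht₁
    have h2 : (t₁ : ℝ) ≤ t := by exact_mod_cast htt1
    calc (c : ℝ) = (c / ε) * ε := by field_simp
      _ ≤ (t : ℝ) * ε := mul_le_mul_of_nonneg_right (by linarith) (le_of_lt hε)
      _ = ε * t := by ring
  have hfin : (R'.card : ℝ) / K - ε ≤ ((X ∩ Set.Iio (K * t)).ncard : ℝ) / (K * t) := by
    have hstep : (R'.card : ℝ) * ((t : ℝ) - c) ≤ ((X ∩ Set.Iio (K * t)).ncard : ℝ) := by
      rw [← hcast]; exact_mod_cast hcount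
    have hKc : (R'.card : ℝ) ≤ K := by exact_mod_cast hRK
    have htp : (0:ℝ) < t := by exact_mod_cast htpos
    have hKp : (0:ℝ) < K := by exact_mod_cast hK0
    have hD : ((R'.card : ℝ) * ((t:ℝ) - c)) / ((K:ℝ) * t)
        ≤ ((X ∩ Set.Iio (K * t)).ncard : ℝ) / ((K:ℝ) * t) :=
      div_le_div_of_nonneg_right hstep (by positivity) |>.trans_eq rfl
    have heq : (R'.card : ℝ)/K - (R'.card * ((t:ℝ) - c))/((K:ℝ)*t) = (R'.card * c)/((K:ℝ)*t) := by
      field_simp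
      ring
    have hsm : ((R'.card : ℝ) * c)/((K:ℝ)*t) ≤ ε := by
      rw [div_le_iff₀ (by positivity)]
      have hcnn : (0:ℝ) ≤ (c:ℝ) := by positivity
      nlinarith
    linarith
  calc (R'.card : ℝ) / K - ε ≤ ((X ∩ Set.Iio (K * t)).ncard : ℝ) / (K * t) := hfin
    _ = ((X ∩ Set.Iio (K * t)).ncard : ℝ) / ((K * t : ℕ) : ℝ) := by push_cast; ring_nf


lemma isFinUnionAP_mod (K : ℕ) (hK : K ≠ 0) (R : Finset ℕ) (hR : R ⊆ Finset.range K) :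
    IsFinUnionAP {x : ℕ | x % K ∈ R} := by
  classical
  refine ⟨R.image (fun r => (K, r)), ?_, ?_⟩
  · intro p hp
    simp only [Finset.mem_image] at hp
    obtain ⟨r, _, rfl⟩ := hp
    exact hK
  · ext x
    simp only [Set.mem_setOf_eq, Set.mem_iUnion, Finset.mem_image, Set.mem_range]
    constructor
    · intro hx
      refine ⟨(K, x % K), ⟨⟨x % K, hx, rfl⟩, ⟨x / K, Nat.div_add_mod x K⟩⟩⟩
    · rintro ⟨p, ⟨r, hr, rfl⟩, ⟨m, rfl⟩⟩
      simp only
      rw [Nat.mul_add_mod, Nat.mod_eq_of_lt (Finset.mem_range.mp (hR hr))]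
      exact hr

lemma buckSet_nonempty (A : Set ℕ) :
    {x : ℝ | ∃ X : Set ℕ, IsFinUnionAP X ∧ A ⊆ X ∧ x = upperAsymptoticDensity X}.Nonempty := by
  refine ⟨upperAsymptoticDensity {x : ℕ | x % 1 ∈ ({0} : Finset ℕ)},
    {x : ℕ | x % 1 ∈ ({0} : Finset ℕ)}, isFinUnionAP_mod 1 one_ne_zero _ (by decide), ?_, rfl⟩
  intro x _
  simp [Nat.mod_one]

lemma buckSet_bddBelow (A : Set ℕ) :
    BddBelow {x : ℝ | ∃ X : Set ℕ, IsFinUnionAP X ∧ A ⊆ X ∧ x = upperAsymptoticDensity X} := by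
  refine ⟨0, ?_⟩
  rintro x ⟨X, _, _, rfl⟩
  exact density_nonneg X

lemma buck_le_of_subset (A : Set ℕ) (K : ℕ) (hK : K ≠ 0) (R : Finset ℕ)
    (hR : R ⊆ Finset.range K) (h : A ⊆ {x : ℕ | x % K ∈ R}) :
    upperBuckDensity A ≤ (R.card : ℝ) / K := by
  refine le_trans (csInf_le (buckSet_bddBelow A) ?_) (density_UB K hK R)
  exact ⟨{x : ℕ | x % K ∈ R}, isFinUnionAP_mod K hK R hR, h, rfl⟩

lemma buck_ge (S : Set ℕ) (K : ℕ) (hK : K ≠ 0) (R' : Finset ℕ) (hR : R' ⊆ Finset.range K)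
    (H : ℕ) (hcov : ∀ y : ℕ, y % K ∈ R' → H ≤ y → y ∈ S) :
    (R'.card : ℝ) / K ≤ upperBuckDensity S := by
  apply le_csInf (buckSet_nonempty S)
  rintro b ⟨X, _, hSX, rfl⟩
  exact density_LB K hK R' hR H X (fun y hy hHy => hSX (hcov y hy hHy))

/-- every residue class contains a full sub-residue-class avoiding all `UU n`, `n > j`. -/
lemma exists_zero_subclass (M : ℕ) (hM : M ≠ 0) (r : ℕ) :
    ∃ (j K r' : ℕ), K ≠ 0 ∧
      ∀ x : ℕ, x % K = r' % K → (x % M = r % M ∧ ¬ goodAt j x) := by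
  obtain ⟨a, u, hu, hMau⟩ := Nat.exists_eq_two_pow_mul_odd hM
  have hu0 : u ≠ 0 := by rintro rfl; simp [Nat.odd_iff] at hu
  set P := 2 ^ TT (a+1) with hP
  have hcop : Nat.Coprime P u := (Nat.coprime_two_left.mpr hu).pow_left _
  set c := r % 2 ^ a with hcdef
  obtain ⟨k, hk1, hk2⟩ := Nat.chineseRemainder hcop c r
  refine ⟨a, P * u, k, mul_ne_zero (pow_ne_zero _ two_ne_zero) hu0, ?_⟩
  intro x hx
  have hxk : x ≡ k [MOD P * u] := hx
  have hxP : x ≡ k [MOD P] := hxk.of_dvd (dvd_mul_right P u)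
  have hxu : x ≡ k [MOD u] := hxk.of_dvd (dvd_mul_left u P)
  have hxc : x ≡ c [MOD P] := hxP.trans hk1
  have haP : 2 ^ a ∣ P := pow_dvd_pow 2 (le_trans (le_TT a) (TT_mono (Nat.le_succ a)))
  have hx2a : x ≡ c [MOD 2 ^ a] := hxc.of_dvd haP
  have hcr : c ≡ r [MOD 2 ^ a] := Nat.mod_modEq r (2 ^ a)
  have hxr2a : x ≡ r [MOD 2 ^ a] := hx2a.trans hcr
  have hxru : x ≡ r [MOD u] := hxu.trans hk2
  constructor
  · have : x ≡ r [MOD 2 ^ a * u] :=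
      (Nat.modEq_and_modEq_iff_modEq_mul ((Nat.coprime_two_left.mpr hu).pow_left a)).mp
        ⟨hxr2a, hxru⟩
    rw [hMau]
    exact this
  · have hiff : goodAt a x ↔ goodAt a c := goodAt_mod dvd_rfl hxc
    rw [hiff]
    unfold goodAt
    have hc0 : c / 2 ^ TT a = 0 := by
      apply Nat.div_eq_of_lt
      calc c < 2 ^ a := Nat.mod_lt r (pow_pos two_pos a)
        _ ≤ 2 ^ TT a := Nat.pow_le_pow_right (by norm_num) (le_TT a)
    simp [hc0]


end BuckNC

end Aux

/-- The pseudometric space `(𝒫(ℕ), d_{𝔟*})` is not complete: there is a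
`d_{𝔟*}`-Cauchy sequence of subsets of `ℕ` that does not `d_{𝔟*}`-converge. -/
theorem not_complete_upperBuckDensity :
    ∃ A : ℕ → Set ℕ,
      (∀ ε : ℝ, 0 < ε → ∃ N : ℕ, ∀ m ≥ N, ∀ n ≥ N,
        min 1 (upperBuckDensity (symmDiff (A m) (A n))) < ε) ∧
      ∀ L : Set ℕ,
        ¬ Tendsto (fun n => min 1 (upperBuckDensity (symmDiff (A n) L)))
          atTop (nhds 0) := by
  classical
  open BuckNC in
  refine ⟨fun n => BuckNC.UU n, ?_, ?_⟩
  · -- Cauchy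
    intro ε hε
    obtain ⟨N, hN⟩ := exists_pow_lt_of_lt_one hε (by norm_num : (1:ℝ)/2 < 1)
    have key : ∀ m n : ℕ, N ≤ m → m ≤ n →
        upperBuckDensity (symmDiff (BuckNC.UU m) (BuckNC.UU n)) < ε := by
      intro m n hm hmn
      rcases eq_or_lt_of_le hmn with rfl | hlt
      · -- m = n : symmetric difference is empty
        have h0 : symmDiff (BuckNC.UU m) (BuckNC.UU m) = (∅ : Set ℕ) := symmDiff_self _
        have hle : upperBuckDensity (symmDiff (BuckNC.UU m) (BuckNC.UU m)) ≤ 0 := by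
          have := BuckNC.buck_le_of_subset (symmDiff (BuckNC.UU m) (BuckNC.UU m)) 1 one_ne_zero
            ∅ (Finset.empty_subset _) (by rw [h0]; exact Set.empty_subset _)
          simpa using this
        calc upperBuckDensity (symmDiff (BuckNC.UU m) (BuckNC.UU m)) ≤ 0 := hle
          _ < ε := hε
      · -- m < n
        have hn1 : 1 ≤ n := by omega
        set Mn := 2 ^ BuckNC.TT n with hMn
        have hMn0 : Mn ≠ 0 := pow_ne_zero _ two_ne_zero
        set R := (Finset.range Mn).filter
          (fun ρ => ∃ j, m ≤ j ∧ j < n ∧ ¬ BuckNC.goodAt j ρ) with hR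
        have hsub : symmDiff (BuckNC.UU m) (BuckNC.UU n) ⊆ {x : ℕ | x % Mn ∈ R} := by
          intro x hx
          rw [Set.mem_symmDiff] at hx
          rcases hx with ⟨hxm, hxn⟩ | ⟨hxn, hxm⟩
          · -- x ∈ UU m, x ∉ UU n
            simp only [BuckNC.UU, Set.mem_setOf_eq, not_forall] at hxn
            obtain ⟨j, hjn, hbad⟩ := hxn
            have hjm : m ≤ j := by
              by_contra hc
              exact hbad (hxm j (by omega))
            simp only [Set.mem_setOf_eq, hR, Finset.mem_filter, Finset.mem_range]
            refine ⟨Nat.mod_lt x (Nat.pos_of_ne_zero hMn0), j, hjm, hjn, ?_⟩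
            rw [BuckNC.goodAt_mod (j := j) (Mo := Mn)
              (pow_dvd_pow 2 (BuckNC.TT_mono hjn)) (Nat.mod_mod_of_dvd x dvd_rfl)]
            exact hbad
          · -- impossible: UU n ⊆ UU m
            exact absurd (fun j hj => hxn j (by omega)) hxm
        have hdvd : ∀ j ≤ n, 2 ^ (j + 2) ∣ Mn := by
          intro j hj
          exact pow_dvd_pow 2 (le_trans (by omega : j + 2 ≤ n + 2) (BuckNC.TT_ge n hn1))
        have hcard : R.card ≤ Mn / 2 ^ (m + 2) := by
          have hsubB : R ⊆ (Finset.Ico m n).biUnion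
              (fun j => (Finset.range Mn).filter (fun ρ => ¬ BuckNC.goodAt j ρ)) := by
            intro ρ hρ
            simp only [hR, Finset.mem_filter, Finset.mem_range] at hρ
            obtain ⟨hρlt, j, hj1, hj2, hj3⟩ := hρ
            simp only [Finset.mem_biUnion, Finset.mem_Ico, Finset.mem_filter, Finset.mem_range]
            exact ⟨j, ⟨hj1, hj2⟩, hρlt, hj3⟩
          calc R.card ≤ ((Finset.Ico m n).biUnion
                (fun j => (Finset.range Mn).filter (fun ρ => ¬ BuckNC.goodAt j ρ))).card :=
                Finset.card_le_card hsubB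
            _ ≤ ∑ j ∈ Finset.Ico m n,
                ((Finset.range Mn).filter (fun ρ => ¬ BuckNC.goodAt j ρ)).card :=
                Finset.card_biUnion_le
            _ ≤ ∑ j ∈ Finset.Ico m n, Mn / 2 ^ (j + 3) := by
                apply Finset.sum_le_sum
                intro j hj
                simp only [Finset.mem_Ico] at hj
                have heq : (Finset.range Mn).filter (fun ρ => ¬ BuckNC.goodAt j ρ)
                    = (Finset.range Mn).filter (fun ρ => ρ / 2 ^ BuckNC.TT j % 2 ^ (j + 3) = 0) := by
                  apply Finset.filter_congr
                  intro ρ _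
                  simp [BuckNC.goodAt]
                rw [heq]
                apply BuckNC.card_zeroblock_le Mn (2 ^ BuckNC.TT j) (2 ^ (j + 3))
                  (pow_pos two_pos _) (pow_pos two_pos _)
                rw [← pow_add, ← BuckNC.TT_succ]
                exact pow_dvd_pow 2 (BuckNC.TT_mono hj.2)
            _ ≤ Mn / 2 ^ (m + 2) := by
                have hS := BuckNC.sum_pow_div_le Mn m n (le_of_lt hlt) hdvd
                exact le_trans (Nat.le_add_right _ _) hS
        have hbuck := BuckNC.buck_le_of_subset _ Mn hMn0 R (Finset.filter_subset _ _) hsub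
        have hreal : (R.card : ℝ) / Mn ≤ 1 / 2 ^ (m + 2) := by
          have h1 : (R.card : ℝ) ≤ (Mn : ℝ) / 2 ^ (m + 2) := by
            calc (R.card : ℝ) ≤ ((Mn / 2 ^ (m + 2) : ℕ) : ℝ) := by exact_mod_cast hcard
              _ ≤ (Mn : ℝ) / (((2 ^ (m + 2) : ℕ) : ℝ)) := Nat.cast_div_le
              _ = (Mn : ℝ) / 2 ^ (m + 2) := by push_cast; ring
          have hMnR : (0:ℝ) < Mn := by
            have : 0 < Mn := Nat.pos_of_ne_zero hMn0
            exact_mod_cast this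
          rw [div_le_div_iff₀ hMnR (by positivity : (0:ℝ) < 2 ^ (m + 2))]
          calc (R.card : ℝ) * 2 ^ (m + 2) ≤ ((Mn : ℝ) / 2 ^ (m + 2)) * 2 ^ (m + 2) :=
                mul_le_mul_of_nonneg_right h1 (by positivity)
            _ = Mn := by field_simp
            _ = 1 * Mn := (one_mul _).symm
        calc upperBuckDensity (symmDiff (BuckNC.UU m) (BuckNC.UU n)) ≤ (R.card : ℝ) / Mn := hbuck
          _ ≤ 1 / 2 ^ (m + 2) := hreal
          _ ≤ 1 / 2 ^ N := by
              apply one_div_le_one_div_of_le (by positivity)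
              exact pow_le_pow_right₀ (by norm_num) (by omega)
          _ = (1 / 2 : ℝ) ^ N := by rw [one_div_pow]
          _ < ε := hN
    refine ⟨N, ?_⟩
    intro m hm n hn
    rcases le_total m n with h | h
    · exact lt_of_le_of_lt (min_le_right _ _) (key m n hm h)
    · rw [symmDiff_comm]
      exact lt_of_le_of_lt (min_le_right _ _) (key n m hn h)
  · -- no limit
    intro L hT
    by_cases hfull : ∃ r M H : ℕ, M ≠ 0 ∧ ∀ x : ℕ, H ≤ x → x % M = r % M → x ∈ L
    · -- L contains a full tail of a residue class
      obtain ⟨r, M, H, hM, hL⟩ := hfull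
      obtain ⟨j, K, r', hK, hprop⟩ := BuckNC.exists_zero_subclass M hM r
      have hKpos : 0 < K := Nat.pos_of_ne_zero hK
      have hKR : (0:ℝ) < K := by exact_mod_cast hKpos
      have hbound : ∀ n : ℕ, j + 1 ≤ n →
          (1:ℝ) / K ≤ min 1 (upperBuckDensity (symmDiff (BuckNC.UU n) L)) := by
        intro n hn
        have h1K : (1:ℝ) / K ≤ 1 := by
          rw [div_le_one hKR]
          exact_mod_cast hKpos
        refine le_min h1K ?_
        have hcov : ∀ y : ℕ, y % K ∈ ({r' % K} : Finset ℕ) → H ≤ y →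
            y ∈ symmDiff (BuckNC.UU n) L := by
          intro y hy hHy
          rw [Finset.mem_singleton] at hy
          obtain ⟨hyM, hybad⟩ := hprop y hy
          have hyL : y ∈ L := hL y hHy hyM
          have hyU : y ∉ BuckNC.UU n := by
            intro hyU
            exact hybad (hyU j (by omega))
          rw [Set.mem_symmDiff]
          exact Or.inr ⟨hyL, hyU⟩
        have := BuckNC.buck_ge (symmDiff (BuckNC.UU n) L) K hK {r' % K}
          (Finset.singleton_subset_iff.mpr (Finset.mem_range.mpr (Nat.mod_lt r' hKpos))) H hcov
        simpa using this
      have hev1 : ∀ᶠ n in atTop,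
          min 1 (upperBuckDensity (symmDiff (BuckNC.UU n) L)) < 1 / K :=
        hT.eventually (gt_mem_nhds (by positivity))
      have hev2 : ∀ᶠ n in atTop,
          (1:ℝ) / K ≤ min 1 (upperBuckDensity (symmDiff (BuckNC.UU n) L)) :=
        eventually_atTop.mpr ⟨j + 1, hbound⟩
      obtain ⟨n, h1, h2⟩ := (hev1.and hev2).exists
      linarith
    · -- no full tail of any residue class is in L
      push_neg at hfull
      have hbound : ∀ n : ℕ, 1 ≤ n →
          (1:ℝ) / 2 ≤ min 1 (upperBuckDensity (symmDiff (BuckNC.UU n) L)) := by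
        intro n hn1
        refine le_min (by norm_num) ?_
        apply le_csInf (BuckNC.buckSet_nonempty _)
        rintro b ⟨X, hX, hsub, rfl⟩
        obtain ⟨s, hs0, hXeq⟩ := hX
        set K := 2 ^ BuckNC.TT n * ∏ p ∈ s, p.1 with hKdef
        have hK0 : K ≠ 0 :=
          mul_ne_zero (pow_ne_zero _ two_ne_zero) (Finset.prod_ne_zero_iff.mpr hs0)
        have hKpos : 0 < K := Nat.pos_of_ne_zero hK0
        set R' := (Finset.range K).filter (fun ρ => ∀ j < n, BuckNC.goodAt j ρ) with hR'
        set Hs := s.sup (fun p => p.2) with hHs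
        have hwit : ∀ ρ : ℕ, ∃ x, Hs ≤ x ∧ x % K = ρ % K ∧ x ∉ L := by
          intro ρ
          obtain ⟨x, hx1, hx2, hx3⟩ := hfull ρ K Hs hK0
          exact ⟨x, hx1, hx2, hx3⟩
        choose g hg1 hg2 hg3 using hwit
        set Hstar := R'.sup g with hHstar
        have hdvdK : ∀ j < n, 2 ^ BuckNC.TT (j + 1) ∣ K := by
          intro j hj
          exact dvd_mul_of_dvd_left (pow_dvd_pow 2 (BuckNC.TT_mono hj)) _
        have hcov : ∀ y : ℕ, y % K ∈ R' → Hstar ≤ y → y ∈ X := by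
          intro y hyR hyH
          have hymem := hyR
          simp only [hR', Finset.mem_filter, Finset.mem_range] at hymem
          set x := g (y % K) with hxdef
          have hx2 : x % K = (y % K) % K := hg2 (y % K)
          have hx2' : x % K = y % K := by
            rw [hx2, Nat.mod_mod_of_dvd y dvd_rfl]
          have hxU : x ∈ BuckNC.UU n := by
            intro i hi
            rw [BuckNC.goodAt_mod (hdvdK i hi) hx2]
            exact hymem.2 i hi
          have hxX : x ∈ X := hsub (by rw [Set.mem_symmDiff]; exact Or.inl ⟨hxU, hg3 (y % K)⟩)
          rw [hXeq] at hxX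
          simp only [Set.mem_iUnion, Set.mem_range] at hxX
          obtain ⟨p, hp, t, hpt⟩ := hxX
          have hxy : x ≤ y := le_trans (Finset.le_sup hyR) hyH
          have hdvdyx : K ∣ y - x := (Nat.modEq_iff_dvd' hxy).mp hx2'
          obtain ⟨d, hd⟩ := hdvdyx
          have hyeq : y = x + K * d := by omega
          have hpK : p.1 ∣ K := dvd_mul_of_dvd_right (Finset.dvd_prod_of_mem (fun p => p.1) hp) _
          obtain ⟨e, he⟩ := hpK
          rw [hXeq]
          simp only [Set.mem_iUnion, Set.mem_range]
          refine ⟨p, hp, t + e * d, ?_⟩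
          have hcalc : p.1 * (t + e * d) + p.2 = (p.1 * t + p.2) + (p.1 * e) * d := by ring
          rw [hcalc, hpt, ← he]
          omega
        have hLB := BuckNC.density_LB K hK0 R' (Finset.filter_subset _ _) Hstar X hcov
        -- cardinality bound
        have hdvd : ∀ i ≤ n, 2 ^ (i + 2) ∣ K := by
          intro i hi
          exact dvd_mul_of_dvd_left
            (pow_dvd_pow 2 (le_trans (by omega : i + 2 ≤ n + 2) (BuckNC.TT_ge n hn1))) _
        have hbad : ((Finset.range K).filter (fun ρ => ¬ ∀ j < n, BuckNC.goodAt j ρ)).card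
            ≤ K / 4 := by
          have hsubB : (Finset.range K).filter (fun ρ => ¬ ∀ j < n, BuckNC.goodAt j ρ)
              ⊆ (Finset.range n).biUnion
                (fun j => (Finset.range K).filter (fun ρ => ¬ BuckNC.goodAt j ρ)) := by
            intro ρ hρ
            simp only [Finset.mem_filter, Finset.mem_range, not_forall] at hρ
            obtain ⟨hρK, jj, hjj, hjbad⟩ := hρ
            simp only [Finset.mem_biUnion, Finset.mem_range, Finset.mem_filter]
            exact ⟨jj, hjj, ⟨hρK, hjbad⟩⟩
          calc ((Finset.range K).filter (fun ρ => ¬ ∀ j < n, BuckNC.goodAt j ρ)).card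
              ≤ ((Finset.range n).biUnion
                (fun j => (Finset.range K).filter (fun ρ => ¬ BuckNC.goodAt j ρ))).card :=
                Finset.card_le_card hsubB
            _ ≤ ∑ j ∈ Finset.range n,
                ((Finset.range K).filter (fun ρ => ¬ BuckNC.goodAt j ρ)).card :=
                Finset.card_biUnion_le
            _ ≤ ∑ j ∈ Finset.range n, K / 2 ^ (j + 3) := by
                apply Finset.sum_le_sum
                intro i hi
                simp only [Finset.mem_range] at hi
                have heq : (Finset.range K).filter (fun ρ => ¬ BuckNC.goodAt i ρ)
                    = (Finset.range K).filter
                      (fun ρ => ρ / 2 ^ BuckNC.TT i % 2 ^ (i + 3) = 0) := by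
                  apply Finset.filter_congr
                  intro ρ _
                  simp [BuckNC.goodAt]
                rw [heq]
                apply BuckNC.card_zeroblock_le K (2 ^ BuckNC.TT i) (2 ^ (i + 3))
                  (pow_pos two_pos _) (pow_pos two_pos _)
                rw [← pow_add, ← BuckNC.TT_succ]
                exact hdvdK i hi
            _ ≤ K / 4 := by
                have hS := BuckNC.sum_pow_div_le K 0 n (Nat.zero_le n) hdvd
                rw [Finset.range_eq_Ico]
                refine le_trans (le_trans (Nat.le_add_right _ _) hS) ?_
                norm_num
        have hsplit := Finset.card_filter_add_card_filter_not
          (s := Finset.range K) (p := fun ρ => ∀ j < n, BuckNC.goodAt j ρ)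
        rw [Finset.card_range] at hsplit
        have hcardK : K ≤ 2 * R'.card := by
          rw [hR']
          omega
        have hcardR : (K : ℝ) / 2 ≤ (R'.card : ℝ) := by
          have : (K : ℝ) ≤ 2 * R'.card := by exact_mod_cast hcardK
          linarith
        calc (1:ℝ) / 2 ≤ (R'.card : ℝ) / K := by
              rw [div_le_div_iff₀ (by norm_num) (by exact_mod_cast hKpos)]
              nlinarith
          _ ≤ upperAsymptoticDensity X := hLB
      have hev1 : ∀ᶠ n in atTop,
          min 1 (upperBuckDensity (symmDiff (BuckNC.UU n) L)) < 1 / 2 :=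
        hT.eventually (gt_mem_nhds (by norm_num))
      have hev2 : ∀ᶠ n in atTop,
          (1:ℝ) / 2 ≤ min 1 (upperBuckDensity (symmDiff (BuckNC.UU n) L)) :=
        eventually_atTop.mpr ⟨1, hbound⟩
      obtain ⟨n, h1, h2⟩ := (hev1.and hev2).exists
      linarith
end

section
/- For every κ ∈ (0,1) there exists an increasing sequence (A_n)_{n∈ℕ} of subsets of ℕ such that each difference A_{n+1} \ A_n is a finite union of infinite arithmetic progressions, Σ_{n} bd*(A_{n+1} \ A_n) < ∞, and for every A ⊆ ℕ satisfying d*(A_n \ A) = 0 for all n ∈ ℕ one has bd*(A \ A_n) ≥ κ for all n ∈ ℕ. -/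
open Filter Topology

/-- The upper Banach density `bd*(A) = lim_n max_k |A ∩ [k, k+n)| / n`, which exists and
equals `inf_{n ≥ 1} sup_k |A ∩ [k, k+n)| / n`. -/
noncomputable def upperBanachDensity (A : Set ℕ) : ℝ :=
  ⨅ n : ℕ, ⨆ k : ℕ, ((A ∩ Set.Ico k (k + (n + 1))).ncard : ℝ) / (n + 1)

namespace BadSeq

/-! ### The construction: `DD c m` is the set of `x` with `x % 2^(2m+2+c) < 2^m`,
and `AA c n = ⋃_{m<n} DD c m`. -/

def QQ (c m : ℕ) : ℕ := 2^(2*m+2+c)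
def Lb (m : ℕ) : ℕ := 2^m
def DD (c m : ℕ) : Set ℕ := {x | x % QQ c m < Lb m}
def AA (c n : ℕ) : Set ℕ := {x | ∃ m < n, x ∈ DD c m}

open Classical in
/-- count of elements of `T` in `[a, b)` -/
noncomputable def cnt (T : Set ℕ) (a b : ℕ) : ℕ :=
  ((Finset.Ico a b).filter (fun x => x ∈ T)).card

lemma QQ_pos (c m : ℕ) : 0 < QQ c m := Nat.pow_pos (by norm_num)

lemma Lb_le_QQ (c m : ℕ) : Lb m ≤ QQ c m :=
  Nat.pow_le_pow_right (by norm_num) (by omega)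

lemma QQ_dvd (c : ℕ) {m m' : ℕ} (h : m ≤ m') : QQ c m ∣ QQ c m' :=
  pow_dvd_pow 2 (by omega)

lemma AA_mono (c : ℕ) {m n : ℕ} (h : m ≤ n) : AA c m ⊆ AA c n := by
  intro x ⟨k, hk, hx⟩; exact ⟨k, by omega, hx⟩

/-! ### Basic counting lemmas -/

lemma ncard_inter_Ico (T : Set ℕ) (a b : ℕ) :
    (T ∩ Set.Ico a b).ncard = cnt T a b := by
  classical
  rw [cnt]
  rw [show T ∩ Set.Ico a b = ↑((Finset.Ico a b).filter (fun x => x ∈ T)) by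
    ext x; simp [Set.mem_Ico, and_comm]]
  rw [Set.ncard_coe_finset]

lemma ncard_inter_Iio (T : Set ℕ) (b : ℕ) :
    (T ∩ Set.Iio b).ncard = cnt T 0 b := by
  rw [← ncard_inter_Ico]; congr 1; ext x; simp

lemma cnt_mono {T T' : Set ℕ} (h : T ⊆ T') (a b : ℕ) : cnt T a b ≤ cnt T' a b := by
  classical
  apply Finset.card_le_card
  intro x hx
  simp only [Finset.mem_filter] at *
  exact ⟨hx.1, h hx.2⟩

lemma cnt_le_len (T : Set ℕ) (a b : ℕ) : cnt T a b ≤ b - a := by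
  classical
  calc cnt T a b ≤ (Finset.Ico a b).card := Finset.card_filter_le _ _
  _ = b - a := Nat.card_Ico a b

lemma cnt_eq_of_subset {T : Set ℕ} {a b : ℕ} (h : Set.Ico a b ⊆ T) :
    cnt T a b = b - a := by
  classical
  rw [cnt, Finset.filter_true_of_mem, Nat.card_Ico]
  intro x hx
  exact h (by simpa using hx)

/-- modulo-injectivity on an interval of length `QQ c m` -/
lemma cnt_le_Lb_of_subset_D {c m : ℕ} {T : Set ℕ} (h : T ⊆ DD c m) (k : ℕ) :
    cnt T k (k + QQ c m) ≤ Lb m := by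
  classical
  have : cnt T k (k + QQ c m) ≤ (Finset.range (Lb m)).card := by
    apply Finset.card_le_card_of_injOn (fun x => x % QQ c m)
    · intro x hx
      simp only [Finset.coe_filter, Set.mem_setOf_eq] at hx
      exact Finset.mem_coe.mpr (Finset.mem_range.mpr (h hx.2))
    · intro x hx y hy hxy
      simp only [Finset.coe_filter, Set.mem_setOf_eq, Finset.mem_Ico] at hx hy
      rcases le_total x y with hle | hle
      · have hd : QQ c m ∣ y - x := (Nat.modEq_iff_dvd' hle).mp hxy
        have h2 : y - x < QQ c m := by omega
        have := Nat.eq_zero_of_dvd_of_lt hd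
        omega
      · have hd : QQ c m ∣ x - y := (Nat.modEq_iff_dvd' hle).mp hxy.symm
        have h2 : x - y < QQ c m := by omega
        have := Nat.eq_zero_of_dvd_of_lt hd
        omega
  rwa [Finset.card_range] at this

/-- aligned window: count of `D`-elements in `[s, s+len)` with `Q ∣ s` -/
lemma cnt_D_aligned {c k : ℕ} {s : ℕ} (hs : QQ c k ∣ s) (len : ℕ) :
    cnt (DD c k) s (s + len) ≤ (len / QQ c k + 1) * Lb k := by
  classical
  set q := QQ c k with hq
  have hqpos := QQ_pos c k
  have : cnt (DD c k) s (s + len) ≤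
      ((Finset.range (len / q + 1)) ×ˢ (Finset.range (Lb k))).card := by
    apply Finset.card_le_card_of_injOn (fun x => ((x - s) / q, x % q))
    · intro x hx
      simp only [Finset.coe_filter, Set.mem_setOf_eq, Finset.mem_Ico] at hx
      obtain ⟨⟨h1, h2⟩, h3⟩ := hx
      simp only [Finset.mem_coe, Finset.mem_product, Finset.mem_range]
      constructor
      · calc (x - s)/q ≤ len / q := Nat.div_le_div_right (by omega)
        _ < len / q + 1 := Nat.lt_succ_self _
      · exact h3
    · intro x hx y hy hxy
      simp only [Finset.coe_filter, Set.mem_setOf_eq, Finset.mem_Ico] at hx hy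
      obtain ⟨u, hu⟩ := hs
      have key : ∀ z, s ≤ z → z % q = (z - s) % q := by
        intro z hz
        obtain ⟨v, rfl⟩ : ∃ v, z = q * u + v := ⟨z - s, by omega⟩
        rw [Nat.mul_add_mod]
        congr 1
        omega
      have e1 : (x - s) / q = (y - s) / q := congrArg Prod.fst hxy
      have e2 : x % q = y % q := congrArg Prod.snd hxy
      have e3 : (x - s) % q = (y - s) % q := by
        rw [← key x hx.1.1, ← key y hy.1.1]; exact e2
      have dx := Nat.div_add_mod (x - s) q
      have dy := Nat.div_add_mod (y - s) q
      rw [← e1] at dy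
      omega
  calc cnt (DD c k) s (s + len) ≤ _ := this
  _ = (len / q + 1) * Lb k := by rw [Finset.card_product, Finset.card_range, Finset.card_range]

/-- a window inside the initial block of a period is fully contained in `DD c m` -/
lemma window_subset_D {c m : ℕ} {s off w : ℕ} (hs : QQ c m ∣ s) (h : off + w ≤ Lb m)
    (hL : Lb m ≤ QQ c m) :
    Set.Ico (s + off) (s + off + w) ⊆ DD c m := by
  obtain ⟨j, rfl⟩ := hs
  intro x hx
  simp only [Set.mem_Ico] at hx
  obtain ⟨y, rfl⟩ : ∃ y, x = QQ c m * j + y := ⟨x - QQ c m * j, by omega⟩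
  show (QQ c m * j + y) % QQ c m < Lb m
  rw [Nat.mul_add_mod, Nat.mod_eq_of_lt (by omega)]
  omega

lemma cnt_split (S U V : Set ℕ) (a b : ℕ) :
    cnt S a b ≤ cnt (S \ (U ∪ V)) a b + cnt U a b + cnt V a b := by
  classical
  simp only [cnt]
  calc ((Finset.Ico a b).filter (fun x => x ∈ S)).card
      ≤ (((Finset.Ico a b).filter (fun x => x ∈ S \ (U ∪ V)) ∪
          (Finset.Ico a b).filter (fun x => x ∈ U)) ∪
          (Finset.Ico a b).filter (fun x => x ∈ V)).card := by
        apply Finset.card_le_card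
        intro x hx
        simp only [Finset.mem_filter, Finset.mem_union, Set.mem_diff, Set.mem_union] at *
        by_cases hU : x ∈ U
        · tauto
        · by_cases hV : x ∈ V <;> tauto
    _ ≤ (((Finset.Ico a b).filter (fun x => x ∈ S \ (U ∪ V))) ∪
          ((Finset.Ico a b).filter (fun x => x ∈ U))).card +
          ((Finset.Ico a b).filter (fun x => x ∈ V)).card := Finset.card_union_le _ _
    _ ≤ _ := by
        refine le_trans (Nat.add_le_add_right (Finset.card_union_le _ _) _) ?_
        simp [Finset.filter_congr_decidable]

/-- sums of counts over pairwise-disjoint windows inside `[a, b)` -/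
lemma sum_cnt_le {ι : Type*} [DecidableEq ι] (T : Set ℕ) (P : Finset ι) (st : ι → ℕ)
    (w a b : ℕ)
    (h1 : ∀ p ∈ P, a ≤ st p ∧ st p + w ≤ b)
    (h2 : ∀ p ∈ P, ∀ q ∈ P, p ≠ q → st p + w ≤ st q ∨ st q + w ≤ st p) :
    ∑ p ∈ P, cnt T (st p) (st p + w) ≤ cnt T a b := by
  classical
  simp only [cnt]
  rw [← Finset.card_biUnion]
  · apply Finset.card_le_card
    intro x hx
    simp only [Finset.mem_biUnion, Finset.mem_filter, Finset.mem_Ico] at *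
    obtain ⟨p, hp, ⟨hx1, hx2⟩⟩ := hx
    have := h1 p hp
    exact ⟨by omega, hx2⟩
  · intro p hp q hq hpq
    simp only [Finset.disjoint_left, Finset.mem_filter, Finset.mem_Ico]
    rintro x ⟨hx1, -⟩ ⟨hx2, -⟩
    rcases h2 p hp q hq hpq with h | h <;> omega

lemma cnt_AA_le (c n a b : ℕ) :
    cnt (AA c n) a b ≤ ∑ k ∈ Finset.range n, cnt (DD c k) a b := by
  classical
  simp only [cnt]
  calc ((Finset.Ico a b).filter (fun x => x ∈ AA c n)).card
      ≤ ((Finset.range n).biUnion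
          (fun k => (Finset.Ico a b).filter (fun x => x ∈ DD c k))).card := by
        apply Finset.card_le_card
        intro x hx
        simp only [Finset.mem_filter, Finset.mem_biUnion, Finset.mem_range] at *
        obtain ⟨hx1, k, hk, hx2⟩ := hx
        exact ⟨k, hk, hx1, hx2⟩
    _ ≤ _ := by
        refine le_trans (Finset.card_biUnion_le) ?_
        simp [Finset.filter_congr_decidable]

/-! ### Density lemmas -/

lemma dens_le_one (T : Set ℕ) (k w : ℕ) :
    ((T ∩ Set.Ico k (k + (w+1))).ncard : ℝ) / (w+1) ≤ 1 := by
  rw [div_le_one (by positivity), ncard_inter_Ico]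
  have := cnt_le_len T k (k + (w+1))
  have : cnt T k (k + (w+1)) ≤ w + 1 := by omega
  exact_mod_cast this

lemma bddAbove_dens (T : Set ℕ) (w : ℕ) :
    BddAbove (Set.range fun k : ℕ => ((T ∩ Set.Ico k (k + (w+1))).ncard : ℝ) / (w+1)) := by
  refine ⟨1, ?_⟩
  rintro x ⟨k, rfl⟩
  exact dens_le_one T k w

lemma iSup_dens_nonneg (T : Set ℕ) (w : ℕ) :
    (0:ℝ) ≤ ⨆ k : ℕ, ((T ∩ Set.Ico k (k + (w+1))).ncard : ℝ) / (w+1) := by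
  refine le_trans ?_ (le_ciSup (bddAbove_dens T w) 0)
  positivity

lemma bd_nonneg (T : Set ℕ) : 0 ≤ upperBanachDensity T :=
  le_ciInf fun w => iSup_dens_nonneg T w

/-- upper bound via a single window length `w+1` and a uniform count bound -/
lemma bd_le_of_cnt_le {T : Set ℕ} {w : ℕ} {C : ℝ} (hC : ∀ k, (cnt T k (k + (w+1)) : ℝ) ≤ C) :
    upperBanachDensity T ≤ C / (w+1) := by
  refine le_trans (ciInf_le ⟨0, ?_⟩ w) ?_
  · rintro x ⟨v, rfl⟩; exact iSup_dens_nonneg T v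
  · refine ciSup_le fun k => ?_
    rw [ncard_inter_Ico]
    exact div_le_div_of_nonneg_right (hC k) (by positivity)

/-- lower bound: if every window length has a good window -/
lemma bd_ge {T : Set ℕ} {κ : ℝ} (h : ∀ w : ℕ, ∃ k, κ * (w+1) ≤ (cnt T k (k + (w+1)) : ℝ)) :
    κ ≤ upperBanachDensity T := by
  refine le_ciInf fun w => ?_
  obtain ⟨k, hk⟩ := h w
  refine le_trans ?_ (le_ciSup (bddAbove_dens T w) k)
  rw [ncard_inter_Ico, le_div_iff₀ (by positivity)]
  linarith

lemma small_of_uad_zero {T : Set ℕ} (h : upperAsymptoticDensity T = 0) {ε : ℝ} (hε : 0 < ε) :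
    ∀ᶠ R : ℕ in Filter.atTop, (cnt T 0 R : ℝ) < ε * R := by
  have hb : Filter.IsBoundedUnder (· ≤ ·) Filter.atTop
      (fun n : ℕ => ((T ∩ Set.Iio n).ncard : ℝ) / n) := by
    refine Filter.isBoundedUnder_of ⟨1, fun (n : ℕ) => ?_⟩
    show ((T ∩ Set.Iio n).ncard : ℝ) / n ≤ 1
    rcases Nat.eq_zero_or_pos n with rfl | hn
    · simp
    · rw [div_le_one (by exact_mod_cast hn), ncard_inter_Iio]
      have := cnt_le_len T 0 n
      exact_mod_cast (by omega : cnt T 0 n ≤ n)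
  have hlt : Filter.limsup (fun n : ℕ => ((T ∩ Set.Iio n).ncard : ℝ) / n) Filter.atTop < ε := by
    rw [← upperAsymptoticDensity, h]; exact hε
  have := Filter.eventually_lt_of_limsup_lt hlt hb
  filter_upwards [this, Filter.eventually_ge_atTop 1] with R hR hR1
  rw [ncard_inter_Iio] at hR
  have hRpos : (0:ℝ) < R := by exact_mod_cast hR1
  calc (cnt T 0 R : ℝ) = (cnt T 0 R : ℝ) / R * R := by field_simp
  _ < ε * R := by exact mul_lt_mul_of_pos_right hR hRpos

/-! ### The difference `AA c (n+1) \ AA c n` is a finite union of APs -/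

lemma mem_DD_iff_mod {c m n : ℕ} (h : m ≤ n) (x : ℕ) :
    x ∈ DD c m ↔ (x % QQ c n) ∈ DD c m := by
  show x % QQ c m < Lb m ↔ x % QQ c n % QQ c m < Lb m
  rw [Nat.mod_mod_of_dvd _ (QQ_dvd c h)]

lemma mem_diff_iff_mod (c n x : ℕ) :
    x ∈ AA c (n+1) \ AA c n ↔ (x % QQ c n) ∈ AA c (n+1) \ AA c n := by
  have key : ∀ k, k ≤ n + 1 → (x ∈ AA c k ↔ (x % QQ c n) ∈ AA c k) := by
    intro k hk
    simp only [AA, Set.mem_setOf_eq]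
    constructor <;> rintro ⟨m, hm, hx⟩ <;> refine ⟨m, hm, ?_⟩
    · exact (mem_DD_iff_mod (by omega) x).mp hx
    · exact (mem_DD_iff_mod (c := c) (n := n) (by omega) x).mpr hx
  simp only [Set.mem_diff]
  rw [key (n+1) le_rfl, key n (by omega)]

lemma finUnionAP_diff (c n : ℕ) : IsFinUnionAP (AA c (n+1) \ AA c n) := by
  classical
  set Q := QQ c n with hQ
  have hQpos := QQ_pos c n
  let T : Finset ℕ := (Finset.range Q).filter (fun r => r ∈ AA c (n+1) \ AA c n)
  refine ⟨T.image (fun r => (Q, r)), ?_, ?_⟩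
  · intro p hp
    simp only [T, Finset.mem_image, Finset.mem_filter, Finset.mem_range] at hp
    obtain ⟨r, _, rfl⟩ := hp
    simp only [ne_eq]
    omega
  · ext x
    simp only [Set.mem_iUnion, Finset.mem_image, Finset.mem_filter, Finset.mem_range,
      Set.mem_range, T]
    constructor
    · intro hx
      refine ⟨(Q, x % Q), ⟨x % Q, ⟨Nat.mod_lt _ hQpos, (mem_diff_iff_mod c n x).mp hx⟩, rfl⟩,
        x / Q, ?_⟩
      simp only
      exact Nat.div_add_mod x Q
    · rintro ⟨p, ⟨r, ⟨hr, hrmem⟩, rfl⟩, t, rfl⟩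
      simp only
      have hxmod : (Q * t + r) % Q = r := by
        rw [Nat.mul_add_mod, Nat.mod_eq_of_lt hr]
      rw [mem_diff_iff_mod c n, hxmod]
      exact hrmem

/-! ### Summability -/

lemma diff_subset_D (c n : ℕ) : AA c (n+1) \ AA c n ⊆ DD c n := by
  rintro x ⟨⟨m, hm, hx⟩, hnx⟩
  rcases Nat.lt_succ_iff_lt_or_eq.mp hm with h | rfl
  · exact absurd ⟨m, h, hx⟩ hnx
  · exact hx

lemma bd_diff_le (c n : ℕ) :
    upperBanachDensity (AA c (n+1) \ AA c n) ≤ (1/2 : ℝ)^n := by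
  have hQpos := QQ_pos c n
  have h1 : upperBanachDensity (AA c (n+1) \ AA c n) ≤ (Lb n : ℝ) / ((QQ c n - 1 : ℕ) + 1) := by
    apply bd_le_of_cnt_le
    intro k
    have := cnt_le_Lb_of_subset_D (diff_subset_D c n) k
    have heq : (QQ c n - 1 : ℕ) + 1 = QQ c n := by omega
    rw [heq]
    exact_mod_cast this
  refine h1.trans ?_
  have heq : ((QQ c n - 1 : ℕ) : ℝ) + 1 = (QQ c n : ℝ) := by
    have : (QQ c n - 1 : ℕ) + 1 = QQ c n := by omega
    exact_mod_cast this
  rw [heq]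
  rw [div_le_iff₀ (by exact_mod_cast hQpos)]
  show (Lb n : ℝ) ≤ (1/2)^n * (QQ c n)
  rw [Lb, QQ]
  push_cast
  rw [pow_add, pow_add, two_mul, pow_add]
  have h2 : ((2:ℝ))^n > 0 := by positivity
  have h3 : ((2:ℝ))^c ≥ 1 := one_le_pow₀ (by norm_num)
  have hkey : (1/2:ℝ)^n * (2^n * 2^n * 2^2 * 2^c) = 2^n * 2^2 * 2^c := by
    have h4 : (1/2:ℝ)^n * 2^n = 1 := by rw [← mul_pow]; norm_num
    calc (1/2:ℝ)^n * (2^n * 2^n * 2^2 * 2^c) = ((1/2:ℝ)^n * 2^n) * (2^n * 2^2 * 2^c) := by ring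
    _ = 2^n * 2^2 * 2^c := by rw [h4]; ring
  rw [hkey]
  nlinarith [h2, h3]

lemma summable_bd (c : ℕ) :
    Summable (fun n : ℕ => upperBanachDensity (AA c (n+1) \ AA c n)) := by
  apply Summable.of_nonneg_of_le (fun n => bd_nonneg _) (fun n => bd_diff_le c n)
  exact summable_geometric_of_lt_one (by norm_num) (by norm_num)

end BadSeq
-- KEY LEMMA (to be appended to full.lean inside namespace BadSeq)
namespace BadSeq

lemma windows_disj {Q wa τ : ℕ} (h : τ * wa ≤ Q) {p q : ℕ × ℕ}
    (hp2 : p.2 < τ) (hq2 : q.2 < τ) (hne : p ≠ q) :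
    (p.1 * Q + p.2 * wa) + wa ≤ q.1 * Q + q.2 * wa ∨
    (q.1 * Q + q.2 * wa) + wa ≤ p.1 * Q + p.2 * wa := by
  have key : ∀ a b : ℕ × ℕ, a.2 < τ → a.1 < b.1 →
      (a.1 * Q + a.2 * wa) + wa ≤ b.1 * Q + b.2 * wa := by
    intro a b ha hab
    calc (a.1 * Q + a.2 * wa) + wa = a.1 * Q + (a.2 + 1) * wa := by ring
    _ ≤ a.1 * Q + τ * wa := Nat.add_le_add_left (Nat.mul_le_mul_right _ ha) _
    _ ≤ a.1 * Q + Q := Nat.add_le_add_left h _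
    _ = (a.1 + 1) * Q := by ring
    _ ≤ b.1 * Q := Nat.mul_le_mul_right _ hab
    _ ≤ b.1 * Q + b.2 * wa := Nat.le_add_right _ _
  rcases lt_trichotomy p.1 q.1 with h1 | h1 | h1
  · exact Or.inl (key p q hp2 h1)
  · have h2 : p.2 ≠ q.2 := fun h2 => hne (Prod.ext h1 h2)
    rcases lt_or_gt_of_ne h2 with h3 | h3
    · left
      rw [h1]
      have : (p.2 + 1) * wa ≤ q.2 * wa := Nat.mul_le_mul_right _ h3
      calc q.1 * Q + p.2 * wa + wa = q.1 * Q + (p.2 + 1) * wa := by ring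
      _ ≤ q.1 * Q + q.2 * wa := Nat.add_le_add_left this _
    · right
      rw [← h1]
      have : (q.2 + 1) * wa ≤ p.2 * wa := Nat.mul_le_mul_right _ h3
      calc p.1 * Q + q.2 * wa + wa = p.1 * Q + (q.2 + 1) * wa := by ring
      _ ≤ p.1 * Q + p.2 * wa := Nat.add_le_add_left this _
  · exact Or.inr (key q p hq2 h1)

lemma geom_sum_Lb_div (c n : ℕ) :
    ∑ k ∈ Finset.range n, ((Lb k : ℝ) / (QQ c k)) ≤ 1 / 2^(c+1) := by
  have heq : ∀ k : ℕ, ((Lb k : ℝ) / (QQ c k)) = (1/2:ℝ)^(k+2+c) := by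
    intro k
    rw [Lb, QQ]
    push_cast
    rw [div_pow, one_pow]
    rw [show 2*k+2+c = k + (k+2+c) by ring, pow_add]
    field_simp
  simp only [heq]
  have : ∑ k ∈ Finset.range n, (1/2:ℝ)^(k+2+c)
      = (1/2:ℝ)^(2+c) * ∑ k ∈ Finset.range n, (1/2:ℝ)^k := by
    rw [Finset.mul_sum]
    apply Finset.sum_congr rfl
    intro k _
    rw [show k+2+c = 2+c+k by ring, pow_add]
  rw [this]
  have hs : ∑ k ∈ Finset.range n, (1/2:ℝ)^k ≤ 2 := by
    have := geom_sum_eq (show (1/2:ℝ) ≠ 1 by norm_num) n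
    rw [this]
    have h0 : (0:ℝ) ≤ (1/2:ℝ)^n := by positivity
    rw [div_le_iff_of_neg (by norm_num : (1/2:ℝ) - 1 < 0)]
    linarith
  have hpos : (0:ℝ) < (1/2:ℝ)^(2+c) := by positivity
  calc (1/2:ℝ)^(2+c) * ∑ k ∈ Finset.range n, (1/2:ℝ)^k ≤ (1/2:ℝ)^(2+c) * 2 :=
        mul_le_mul_of_nonneg_left hs (le_of_lt hpos)
  _ = 1 / 2^(c+1) := by
      have h5 : (1/2:ℝ)^(2+c) = 1/2^(2+c) := by rw [div_pow, one_pow]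
      rw [h5, div_mul_eq_mul_div, one_mul,
        div_eq_div_iff (by positivity) (by positivity), one_mul,
        show 2+c = (c+1)+1 by ring, pow_succ]
      ring

lemma geom_sum_Lb (n : ℕ) : ∑ k ∈ Finset.range n, ((Lb k : ℝ)) ≤ 2^n := by
  have heq : ∀ k : ℕ, ((Lb k : ℝ)) = (2:ℝ)^k := by intro k; rw [Lb]; push_cast; ring
  simp only [heq]
  have := geom_sum_eq (show (2:ℝ) ≠ 1 by norm_num) n
  rw [this]
  have h0 : (1:ℝ) ≤ (2:ℝ)^n := one_le_pow₀ (by norm_num)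
  rw [div_le_iff₀ (by norm_num : (0:ℝ) < 2 - 1)]
  linarith

set_option maxHeartbeats 1000000 in
lemma exists_good_window (κ : ℝ) (hκ0 : 0 < κ) (hκ1 : κ < 1) (c : ℕ)
    (hc : (1:ℝ)/2^(c+1) ≤ (1-κ)/4) (B : Set ℕ)
    (hB : ∀ n : ℕ, upperAsymptoticDensity (AA c n \ B) = 0) (n wa : ℕ) (hwa : 0 < wa) :
    ∃ k, κ * wa ≤ (cnt (B \ AA c n) k (k + wa) : ℝ) := by
  classical
  have h1κ : (0:ℝ) < 1 - κ := by linarith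
  -- choose the scale m
  obtain ⟨m, hm⟩ := pow_unbounded_of_one_lt ((2*(2^n + wa))/(1-κ) : ℝ)
    (by norm_num : (1:ℝ) < 2)
  have hLm : ((Lb m : ℕ) : ℝ) = 2^m := by rw [Lb]; push_cast; ring
  have hsize : 2*((2:ℝ)^n + wa) ≤ (1-κ) * (Lb m : ℝ) := by
    rw [hLm]
    rw [div_lt_iff₀ h1κ] at hm
    linarith
  have hLmnn : (0:ℝ) ≤ (Lb m : ℝ) := Nat.cast_nonneg _
  have hshrink : (1-κ) * (Lb m : ℝ) ≤ (Lb m : ℝ) := by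
    nlinarith [mul_nonneg (le_of_lt hκ0) hLmnn]
  have hwa2 : (2:ℝ) * wa ≤ (Lb m : ℝ) := by
    have hp : (0:ℝ) < 2^n := by positivity
    linarith
  have hwaLm : wa ≤ Lb m := by
    have : (wa:ℝ) ≤ (Lb m : ℝ) := by
      have : (0:ℝ) ≤ wa := by positivity
      linarith
    exact_mod_cast this
  have hnm : n ≤ m := by
    by_contra hcon
    push_neg at hcon
    have h2 : (Lb m : ℝ) ≤ 2^n := by
      rw [hLm]
      apply pow_le_pow_right₀ (by norm_num) (by omega)
    have hp : (0:ℝ) < wa := by exact_mod_cast hwa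
    linarith
  set Q := QQ c m with hQdef
  have hQpos := QQ_pos c m
  have hLQ := Lb_le_QQ c m
  -- the window partition parameter
  set τ := Lb m / wa with hτdef
  have hτ1 : 1 ≤ τ := (Nat.one_le_div_iff hwa).mpr hwaLm
  have hτwa : τ * wa ≤ Lb m := Nat.div_mul_le_self _ _
  have hτwa2 : Lb m < τ * wa + wa := by
    have hmod : wa * τ + Lb m % wa = Lb m := by rw [hτdef]; exact Nat.div_add_mod _ _
    have hlt := Nat.mod_lt (Lb m) hwa
    have hcomm : wa * τ = τ * wa := Nat.mul_comm _ _
    omega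
  -- the removed set N
  set N := AA c (m+1) \ B with hNdef
  set ε := (1-κ) * (Lb m : ℝ) / (4 * Q) with hεdef
  have hLmpos : (0:ℝ) < (Lb m : ℝ) := by rw [hLm]; positivity
  have hQRpos : (0:ℝ) < (Q : ℝ) := by exact_mod_cast hQpos
  have hε : 0 < ε := by rw [hεdef]; positivity
  obtain ⟨R₀, hR₀⟩ := Filter.eventually_atTop.mp (small_of_uad_zero (hB (m+1)) hε)
  set J := max 1 R₀ with hJdef
  have hJ1 : 1 ≤ J := le_max_left _ _
  have hJQ : R₀ ≤ J * Q := le_trans (le_max_right _ _) (Nat.le_mul_of_pos_right J hQpos)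
  set P := (Finset.range J) ×ˢ (Finset.range τ) with hPdef
  set st : ℕ × ℕ → ℕ := fun p => p.1 * Q + p.2 * wa with hstdef
  have hPmem : ∀ p ∈ P, p.1 < J ∧ p.2 < τ := by
    intro p hp
    simpa [hPdef, Finset.mem_product] using hp
  have hdisj : ∀ p ∈ P, ∀ q ∈ P, p ≠ q → st p + wa ≤ st q ∨ st q + wa ≤ st p := by
    intro p hp q hq hne
    exact windows_disj (le_trans hτwa hLQ) (hPmem p hp).2 (hPmem q hq).2 hne
  have hwin : ∀ p ∈ P, st p + wa ≤ J * Q := by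
    intro p hp
    obtain ⟨h1, h2⟩ := hPmem p hp
    calc st p + wa = p.1 * Q + (p.2 * wa + wa) := by rw [hstdef]; ring
    _ = p.1 * Q + (p.2 + 1) * wa := by ring
    _ ≤ p.1 * Q + τ * wa := Nat.add_le_add_left (Nat.mul_le_mul_right _ h2) _
    _ ≤ p.1 * Q + Q := Nat.add_le_add_left (le_trans hτwa hLQ) _
    _ = (p.1 + 1) * Q := by ring
    _ ≤ J * Q := Nat.mul_le_mul_right _ h1
  -- bound for the N-part
  have hsumN : ∑ p ∈ P, cnt N (st p) (st p + wa) ≤ cnt N 0 (J*Q) := by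
    apply sum_cnt_le N P st wa 0 (J*Q)
    · intro p hp; exact ⟨Nat.zero_le _, hwin p hp⟩
    · exact hdisj
  have hcntN : (cnt N 0 (J*Q) : ℝ) < ε * (J*Q) := by
    have := hR₀ (J*Q) hJQ
    exact_mod_cast this
  -- bound for the AA-part
  set Ab := ∑ k ∈ Finset.range n, (Lb m / QQ c k + 1) * Lb k with hAbdef
  have hAj : ∀ j : ℕ, cnt (AA c n) (j*Q) (j*Q + Lb m) ≤ Ab := by
    intro j
    refine le_trans (cnt_AA_le c n _ _) ?_
    apply Finset.sum_le_sum
    intro k hk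
    have hkm : k ≤ m := by
      have := Finset.mem_range.mp hk
      omega
    have hdvd : QQ c k ∣ j * Q := Dvd.dvd.mul_left (QQ_dvd c hkm) j
    exact cnt_D_aligned hdvd (Lb m)
  have hAjsum : ∀ j ∈ Finset.range J,
      ∑ t ∈ Finset.range τ, cnt (AA c n) (j*Q + t*wa) (j*Q + t*wa + wa) ≤ Ab := by
    intro j _
    refine le_trans ?_ (hAj j)
    apply sum_cnt_le (AA c n) (Finset.range τ) (fun t => j*Q + t*wa) wa (j*Q) (j*Q + Lb m)
    · intro t ht
      have ht' := Finset.mem_range.mp ht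
      constructor
      · omega
      · have : (t+1) * wa ≤ τ * wa := Nat.mul_le_mul_right _ ht'
        have := hτwa
        calc j*Q + t*wa + wa = j*Q + (t+1)*wa := by ring
        _ ≤ j*Q + τ*wa := by omega
        _ ≤ j*Q + Lb m := by omega
    · intro t ht u hu htu
      have ht' := Finset.mem_range.mp ht
      have hu' := Finset.mem_range.mp hu
      rcases lt_or_gt_of_ne htu with h | h
      · left
        have : (t+1) * wa ≤ u * wa := Nat.mul_le_mul_right _ h
        calc j*Q + t*wa + wa = j*Q + (t+1)*wa := by ring
        _ ≤ j*Q + u*wa := by omega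
      · right
        have : (u+1) * wa ≤ t * wa := Nat.mul_le_mul_right _ h
        calc j*Q + u*wa + wa = j*Q + (u+1)*wa := by ring
        _ ≤ j*Q + t*wa := by omega
  have hsumA : ∑ p ∈ P, cnt (AA c n) (st p) (st p + wa) ≤ J * Ab := by
    rw [hPdef, Finset.sum_product]
    calc ∑ j ∈ Finset.range J, ∑ t ∈ Finset.range τ,
          cnt (AA c n) (st (j, t)) (st (j, t) + wa)
        ≤ ∑ j ∈ Finset.range J, Ab := Finset.sum_le_sum hAjsum
      _ = J * Ab := by rw [Finset.sum_const, Finset.card_range, smul_eq_mul]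
  -- real bound on Ab
  have hAb : (Ab : ℝ) ≤ (1-κ)/4 * (Lb m : ℝ) + 2^n := by
    rw [hAbdef]
    push_cast
    have step1 : ∀ k ∈ Finset.range n,
        ((Lb m / QQ c k : ℕ) + 1 : ℝ) * (Lb k : ℝ)
        ≤ ((Lb m : ℝ) / (QQ c k : ℝ)) * (Lb k : ℝ) + (Lb k : ℝ) := by
      intro k _
      have h1 : ((Lb m / QQ c k : ℕ) : ℝ) ≤ (Lb m : ℝ) / (QQ c k : ℝ) := Nat.cast_div_le
      have h2 : (0:ℝ) ≤ (Lb k : ℝ) := by positivity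
      nlinarith
    calc ∑ k ∈ Finset.range n, ((Lb m / QQ c k : ℕ) + 1 : ℝ) * (Lb k : ℝ)
        ≤ ∑ k ∈ Finset.range n, (((Lb m : ℝ) / (QQ c k : ℝ)) * (Lb k : ℝ) + (Lb k : ℝ)) :=
          Finset.sum_le_sum step1
      _ = (Lb m : ℝ) * (∑ k ∈ Finset.range n, ((Lb k : ℝ) / (QQ c k : ℝ)))
          + ∑ k ∈ Finset.range n, (Lb k : ℝ) := by
          rw [Finset.sum_add_distrib, Finset.mul_sum]
          congr 1
          apply Finset.sum_congr rfl
          intro k _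
          ring
      _ ≤ (Lb m : ℝ) * (1 / 2^(c+1)) + 2^n := by
          have hg1 := geom_sum_Lb_div c n
          have hg2 := geom_sum_Lb n
          have := mul_le_mul_of_nonneg_left hg1 (le_of_lt hLmpos)
          linarith
      _ ≤ (1-κ)/4 * (Lb m : ℝ) + 2^n := by
          have := mul_le_mul_of_nonneg_left hc (le_of_lt hLmpos)
          linarith
  -- pigeonhole
  by_contra hcon
  push_neg at hcon
  have hPne : P.Nonempty := ⟨(0, 0), by
    simp only [hPdef, Finset.mem_product, Finset.mem_range]
    omega⟩
  have hbig : ∀ p ∈ P, (1-κ) * wa <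
      ((cnt (AA c n) (st p) (st p + wa) + cnt N (st p) (st p + wa) : ℕ) : ℝ) := by
    intro p hp
    obtain ⟨hp1, hp2⟩ := hPmem p hp
    -- the window is fully inside DD c m
    have hsub : Set.Ico (p.1 * Q + p.2 * wa) (p.1 * Q + p.2 * wa + wa) ⊆ DD c m := by
      apply window_subset_D (Dvd.dvd.mul_left dvd_rfl p.1) ?_ hLQ
      calc p.2 * wa + wa = (p.2 + 1) * wa := by ring
      _ ≤ τ * wa := Nat.mul_le_mul_right _ hp2
      _ ≤ Lb m := hτwa
    have hcntD : cnt (DD c m) (st p) (st p + wa) = wa := by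
      rw [hstdef]
      simp only
      rw [cnt_eq_of_subset hsub]
      omega
    have hsplit := cnt_split (DD c m) (AA c n) N (st p) (st p + wa)
    have hsub2 : DD c m \ (AA c n ∪ N) ⊆ B \ AA c n := by
      rintro x ⟨hx1, hx2⟩
      simp only [Set.mem_union, not_or] at hx2
      refine ⟨?_, hx2.1⟩
      by_contra hxB
      exact hx2.2 ⟨⟨m, Nat.lt_succ_self m, hx1⟩, hxB⟩
    have hmono := cnt_mono hsub2 (st p) (st p + wa)
    have hgood := hcon (st p)
    have hle : wa ≤ cnt (B \ AA c n) (st p) (st p + wa)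
        + cnt (AA c n) (st p) (st p + wa) + cnt N (st p) (st p + wa) := by omega
    have hchain : (wa : ℝ) ≤ (cnt (B \ AA c n) (st p) (st p + wa) : ℝ)
        + (cnt (AA c n) (st p) (st p + wa) : ℝ) + (cnt N (st p) (st p + wa) : ℝ) := by
      exact_mod_cast hle
    have hgoodR : (cnt (B \ AA c n) (st p) (st p + wa) : ℝ) < κ * wa := hgood
    push_cast
    linarith
  have hsumlow : (J * τ : ℝ) * ((1-κ) * wa) <
      ∑ p ∈ P, ((cnt (AA c n) (st p) (st p + wa) + cnt N (st p) (st p + wa) : ℕ) : ℝ) := by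
    have := Finset.sum_lt_sum_of_nonempty hPne hbig
    have hcard : P.card = J * τ := by
      rw [hPdef, Finset.card_product, Finset.card_range, Finset.card_range]
    rw [Finset.sum_const, hcard] at this
    simpa [nsmul_eq_mul, mul_comm, mul_assoc, mul_left_comm] using this
  have hsumhigh : ∑ p ∈ P, ((cnt (AA c n) (st p) (st p + wa) + cnt N (st p) (st p + wa) : ℕ) : ℝ)
      < (J : ℝ) * ((1-κ)/4 * (Lb m : ℝ) + 2^n) + (J : ℝ) * ((1-κ) * (Lb m : ℝ) / 4) := by
    push_cast
    rw [Finset.sum_add_distrib]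
    have e1 : ∑ p ∈ P, (cnt (AA c n) (st p) (st p + wa) : ℝ) ≤ (J : ℝ) * (Ab : ℝ) := by
      have h' : ((∑ p ∈ P, cnt (AA c n) (st p) (st p + wa) : ℕ) : ℝ) ≤ ((J * Ab : ℕ) : ℝ) :=
        Nat.cast_le.mpr hsumA
      push_cast at h'
      exact h'
    have e2 : ∑ p ∈ P, (cnt N (st p) (st p + wa) : ℝ) < (J : ℝ) * ((1-κ) * (Lb m : ℝ) / 4) := by
      have h1 : ((∑ p ∈ P, cnt N (st p) (st p + wa) : ℕ) : ℝ) ≤ (cnt N 0 (J*Q) : ℝ) :=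
        Nat.cast_le.mpr hsumN
      push_cast at h1
      have h3 : (cnt N 0 (J*Q) : ℝ) < ε * ((J:ℝ) * (Q:ℝ)) := by
        push_cast at hcntN
        linarith
      have h2 : ε * ((J : ℝ) * (Q:ℝ)) = (J : ℝ) * ((1-κ) * (Lb m : ℝ) / 4) := by
        rw [hεdef]
        field_simp
      linarith
    have e3 : (J:ℝ) * (Ab:ℝ) ≤ (J : ℝ) * ((1-κ)/4 * (Lb m : ℝ) + 2^n) := by
      apply mul_le_mul_of_nonneg_left hAb (by positivity)
    linarith
  -- final numeric contradiction
  have hfinal : (J : ℝ) * ((1-κ)/4 * (Lb m : ℝ) + 2^n) + (J : ℝ) * ((1-κ) * (Lb m : ℝ) / 4)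
      ≤ (J * τ : ℝ) * ((1-κ) * wa) := by
    have hJpos : (0:ℝ) < (J:ℝ) := by exact_mod_cast hJ1
    have hstep : (1-κ)/4 * (Lb m : ℝ) + 2^n + (1-κ) * (Lb m : ℝ) / 4
        ≤ (τ : ℝ) * ((1-κ) * wa) := by
      -- 2^n ≤ (1-κ)Lm/2 - wa  and  Lm - wa ≤ τ wa
      have h1 : (2:ℝ)^n + wa ≤ (1-κ) * (Lb m : ℝ) / 2 := by linarith
      have h2 : (Lb m : ℝ) - wa ≤ (τ : ℝ) * wa := by
        have hcast : ((Lb m : ℕ) : ℝ) < (τ:ℝ) * wa + wa := by exact_mod_cast hτwa2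
        linarith
      have hwapos : (0:ℝ) < wa := by exact_mod_cast hwa
      have h3 : (1-κ) * ((Lb m:ℝ) - wa) ≤ (1-κ) * ((τ:ℝ) * wa) :=
        mul_le_mul_of_nonneg_left h2 (le_of_lt h1κ)
      have h4 : (1-κ) * wa ≤ wa := by nlinarith
      nlinarith
    calc (J : ℝ) * ((1-κ)/4 * (Lb m : ℝ) + 2^n) + (J : ℝ) * ((1-κ) * (Lb m : ℝ) / 4)
        = (J:ℝ) * ((1-κ)/4 * (Lb m : ℝ) + 2^n + (1-κ) * (Lb m : ℝ) / 4) := by ring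
      _ ≤ (J:ℝ) * ((τ : ℝ) * ((1-κ) * wa)) := mul_le_mul_of_nonneg_left hstep (le_of_lt hJpos)
      _ = (J * τ : ℝ) * ((1-κ) * wa) := by ring
  linarith

end BadSeq

/-- For every `κ ∈ (0,1)` there exists an increasing sequence `(Aₙ)` of
subsets of `ℕ` such that each `A_{n+1} \ Aₙ` is a finite union of infinite arithmetic
progressions, `∑ bd*(A_{n+1} \ Aₙ) < ∞`, and for every `A ⊆ ℕ` with `d*(Aₙ \ A) = 0`
for all `n`, one has `bd*(A \ Aₙ) ≥ κ` for all `n`. -/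
theorem exists_bad_increasing_sequence (κ : ℝ) (hκ0 : 0 < κ) (hκ1 : κ < 1) :
    ∃ A : ℕ → Set ℕ,
      (∀ m n : ℕ, m ≤ n → A m ⊆ A n) ∧
      (∀ n : ℕ, IsFinUnionAP (A (n + 1) \ A n)) ∧
      Summable (fun n : ℕ => upperBanachDensity (A (n + 1) \ A n)) ∧
      ∀ B : Set ℕ, (∀ n : ℕ, upperAsymptoticDensity (A n \ B) = 0) →
        ∀ n : ℕ, κ ≤ upperBanachDensity (B \ A n) := by
  have h1κ : (0:ℝ) < 1 - κ := by linarith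
  obtain ⟨c, hc'⟩ := pow_unbounded_of_one_lt ((4:ℝ)/(1-κ)) (by norm_num : (1:ℝ) < 2)
  have hc : (1:ℝ)/2^(c+1) ≤ (1-κ)/4 := by
    have hp : (0:ℝ) < 2^c := by positivity
    have hq : (0:ℝ) < 2^(c+1) := by positivity
    rw [div_le_div_iff₀ hq (by norm_num)]
    rw [div_lt_iff₀ h1κ] at hc'
    have hle : (2:ℝ)^c ≤ 2^(c+1) := by
      apply pow_le_pow_right₀ (by norm_num) (by omega)
    nlinarith
  refine ⟨BadSeq.AA c, fun m n h => BadSeq.AA_mono c h, fun n => BadSeq.finUnionAP_diff c n,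
    BadSeq.summable_bd c, ?_⟩
  intro B hB n
  apply BadSeq.bd_ge
  intro w
  obtain ⟨k, hk⟩ := BadSeq.exists_good_window κ hκ0 hκ1 c hc B hB n (w+1) (by omega)
  refine ⟨k, ?_⟩
  push_cast at hk ⊢
  exact hk
end

section
/- Let φ₁, φ₂ : 𝒫(ℕ) → [0,∞] be lower semicontinuous submeasures with Exh(φ₁) = Exh(φ₂). Then the pseudometrics d_{‖·‖_{φ₁}} and d_{‖·‖_{φ₂}} are topologically equivalent: for every sequence (A_n)_{n∈ℕ} of subsets of ℕ and every A ⊆ ℕ, lim_{n→∞} ‖A_n △ A‖_{φ₁} = 0 if and only if lim_{n→∞} ‖A_n △ A‖_{φ₂} = 0. -/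
open Filter Topology
open scoped ENNReal

/-- The `φ`-mass at infinity `‖A‖_φ = lim_n φ(A \ {0,…,n-1})`; since the sequence is
nonincreasing (for monotone `φ`), the limit equals the infimum. -/
noncomputable def exhNorm (φ : Set ℕ → ℝ≥0∞) (A : Set ℕ) : ℝ≥0∞ :=
  ⨅ n : ℕ, φ (A \ Set.Iio n)

/-- The exhaustive ideal `Exh(φ) = {A ⊆ ℕ : ‖A‖_φ = 0}`. -/
def Exh (φ : Set ℕ → ℝ≥0∞) : Set (Set ℕ) :=
  {A : Set ℕ | exhNorm φ A = 0}

lemma finset_biUnion_le (φ : Set ℕ → ℝ≥0∞) (h0 : φ ∅ = 0)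
    (hmono : ∀ A B : Set ℕ, A ⊆ B → φ A ≤ φ B)
    (hsub : ∀ A B : Set ℕ, φ (A ∪ B) ≤ φ A + φ B)
    (s : Finset ℕ) (G : ℕ → Set ℕ) : φ (⋃ k ∈ s, G k) ≤ ∑ k ∈ s, φ (G k) := by
  classical
  induction s using Finset.induction with
  | empty => simp [h0]
  | @insert a s ha ih =>
    rw [Finset.sum_insert ha, Finset.set_biUnion_insert]
    exact le_trans (hsub (G a) (⋃ k ∈ s, G k)) (add_le_add le_rfl ih)

lemma key_lemma
    (φ₁ φ₂ : Set ℕ → ℝ≥0∞)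
    (hφ₁mono : ∀ A B : Set ℕ, A ⊆ B → φ₁ A ≤ φ₁ B)
    (hφ₁lsc : ∀ A : Set ℕ, φ₁ A = ⨆ n : ℕ, φ₁ (A ∩ Set.Iio n))
    (hφ₂0 : φ₂ ∅ = 0)
    (hφ₂mono : ∀ A B : Set ℕ, A ⊆ B → φ₂ A ≤ φ₂ B)
    (hφ₂sub : ∀ A B : Set ℕ, φ₂ (A ∪ B) ≤ φ₂ A + φ₂ B)
    (hφ₂lsc : ∀ A : Set ℕ, φ₂ A = ⨆ n : ℕ, φ₂ (A ∩ Set.Iio n))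
    (hExh : Exh φ₂ ⊆ Exh φ₁)
    (B : ℕ → Set ℕ)
    (h2 : Tendsto (fun n => exhNorm φ₂ (B n)) atTop (nhds 0)) :
    Tendsto (fun n => exhNorm φ₁ (B n)) atTop (nhds 0) := by
  by_contra hc
  rw [ENNReal.tendsto_atTop_zero] at hc h2
  push_neg at hc
  obtain ⟨ε₀, hε₀pos, H⟩ := hc
  set ε : ℝ≥0∞ := min ε₀ 1 with hεdef
  have hεpos : 0 < ε := lt_min hε₀pos one_pos
  have hεle : ε ≤ ε₀ := min_le_left _ _
  -- step construction
  have step : ∀ m k : ℕ, ∃ p : Set ℕ × ℕ, m < p.2 ∧ p.1 ⊆ Set.Ico m p.2 ∧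
      ε < φ₁ p.1 ∧ φ₂ p.1 ≤ (2⁻¹ : ℝ≥0∞) ^ k := by
    intro m k
    obtain ⟨N, hN⟩ := h2 ((2⁻¹ : ℝ≥0∞) ^ (k + 1))
      (pos_iff_ne_zero.mpr (pow_ne_zero _ (by simp)))
    obtain ⟨n, hnN, hn⟩ := H N
    have hn2 : exhNorm φ₂ (B n) ≤ (2⁻¹ : ℝ≥0∞) ^ (k + 1) := hN n hnN
    have hlt : exhNorm φ₂ (B n) < (2⁻¹ : ℝ≥0∞) ^ k := by
      refine lt_of_le_of_lt hn2 ?_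
      have h1 : (2⁻¹ : ℝ≥0∞) ^ (k + 1) = (2⁻¹ : ℝ≥0∞) ^ k / 2 := by
        rw [pow_succ, div_eq_mul_inv]
      rw [h1]
      exact ENNReal.half_lt_self (pow_ne_zero _ (by simp)) (ENNReal.pow_ne_top (by simp))
    obtain ⟨j, hj⟩ := iInf_lt_iff.mp hlt
    set m' := max (m + 1) j with hm'
    have hsubm : B n \ Set.Iio m' ⊆ B n \ Set.Iio j := by
      intro x hx
      simp only [Set.mem_diff, Set.mem_Iio, not_lt] at hx ⊢
      exact ⟨hx.1, le_trans (le_max_right (m + 1) j) hx.2⟩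
    have hφ2m' : φ₂ (B n \ Set.Iio m') ≤ (2⁻¹ : ℝ≥0∞) ^ k :=
      le_trans (hφ₂mono _ _ hsubm) hj.le
    have hφ1m' : ε < φ₁ (B n \ Set.Iio m') := by
      refine lt_of_le_of_lt hεle (lt_of_lt_of_le hn ?_)
      exact iInf_le _ m'
    rw [hφ₁lsc (B n \ Set.Iio m')] at hφ1m'
    obtain ⟨M, hM⟩ := lt_iSup_iff.mp hφ1m'
    refine ⟨((B n \ Set.Iio m') ∩ Set.Iio M, max M (m' + 1)), ?_, ?_, hM, ?_⟩
    · exact lt_of_lt_of_le (Nat.lt_succ_of_lt (lt_of_lt_of_le (Nat.lt_succ_self m) (le_max_left _ _)))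
        (le_max_right _ _)
    · rintro x ⟨⟨hx1, hx2⟩, hx3⟩
      simp only [Set.mem_Iio, not_lt] at hx2
      exact ⟨le_trans (le_trans (Nat.le_succ m) (le_max_left _ _)) hx2,
        lt_of_lt_of_le hx3 (le_max_left _ _)⟩
    · exact le_trans (hφ₂mono _ _ Set.inter_subset_left) hφ2m'
  choose P hP1 hP2 hP3 hP4 using step
  -- recursively define cutoffs
  let g : ℕ → ℕ := fun k => Nat.rec 0 (fun k mk => (P mk k).2) k
  have hg_succ : ∀ k, g (k + 1) = (P (g k) k).2 := fun k => rfl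
  have hgmono : StrictMono g := strictMono_nat_of_lt_succ (fun k => hP1 (g k) k)
  have hgk : ∀ k, k ≤ g k := fun k => hgmono.le_apply
  set C : Set ℕ := ⋃ k, (P (g k) k).1 with hC
  -- C ∉ Exh φ₁
  have hC1 : ε ≤ exhNorm φ₁ C := by
    refine le_iInf fun n => ?_
    refine le_trans (hP3 (g n) n).le (hφ₁mono _ _ ?_)
    intro x hx
    have hx' := hP2 (g n) n hx
    refine ⟨Set.mem_iUnion.mpr ⟨n, hx⟩, ?_⟩
    simp only [Set.mem_Iio, not_lt]
    exact le_trans (hgk n) hx'.1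
  -- C ∈ Exh φ₂
  have hC2 : exhNorm φ₂ C = 0 := by
    have hbound : ∀ j : ℕ, exhNorm φ₂ C ≤ (2⁻¹ : ℝ≥0∞) ^ j := by
      intro j
      refine le_trans (iInf_le _ (g (j + 1))) ?_
      -- C \ Iio (g (j+1)) ⊆ ⋃ i, P (g (j+1+i)) (j+1+i)
      have hsub1 : C \ Set.Iio (g (j + 1)) ⊆ ⋃ i, (P (g (j + 1 + i)) (j + 1 + i)).1 := by
        rintro x ⟨hx1, hx2⟩
        simp only [Set.mem_Iio, not_lt] at hx2
        obtain ⟨k, hk⟩ := Set.mem_iUnion.mp hx1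
        have hkj : j + 1 ≤ k := by
          by_contra hlt
          push_neg at hlt
          have hxlt : x < g (k + 1) := by
            have := (hP2 (g k) k hk).2
            rw [← hg_succ k] at this
            exact this
          have : g (k + 1) ≤ g (j + 1) := hgmono.le_iff_le.mpr hlt
          omega
        exact Set.mem_iUnion.mpr ⟨k - (j + 1), by
          have : j + 1 + (k - (j + 1)) = k := by omega
          rw [this]; exact hk⟩
      refine le_trans (hφ₂mono _ _ hsub1) ?_
      rw [hφ₂lsc]
      refine iSup_le fun n => ?_
      have hsub2 : (⋃ i, (P (g (j + 1 + i)) (j + 1 + i)).1) ∩ Set.Iio n ⊆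
          ⋃ i ∈ Finset.range n, (P (g (j + 1 + i)) (j + 1 + i)).1 := by
        rintro x ⟨hx1, hx2⟩
        obtain ⟨i, hi⟩ := Set.mem_iUnion.mp hx1
        have hxi : j + 1 + i ≤ x := le_trans (hgk _) (hP2 _ _ hi).1
        refine Set.mem_iUnion.mpr ⟨i, Set.mem_iUnion.mpr ⟨?_, hi⟩⟩
        simp only [Finset.mem_range]
        simp only [Set.mem_Iio] at hx2
        omega
      refine le_trans (hφ₂mono _ _ hsub2) ?_
      refine le_trans (finset_biUnion_le φ₂ hφ₂0 hφ₂mono hφ₂sub _ _) ?_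
      have hsum : ∑ i ∈ Finset.range n, φ₂ (P (g (j + 1 + i)) (j + 1 + i)).1 ≤
          ∑ i ∈ Finset.range n, (2⁻¹ : ℝ≥0∞) ^ (j + 1 + i) :=
        Finset.sum_le_sum fun i _ => hP4 _ _
      refine le_trans hsum ?_
      calc ∑ i ∈ Finset.range n, (2⁻¹ : ℝ≥0∞) ^ (j + 1 + i)
          ≤ ∑' i : ℕ, (2⁻¹ : ℝ≥0∞) ^ (j + 1 + i) := ENNReal.sum_le_tsum _
        _ = (2⁻¹ : ℝ≥0∞) ^ (j + 1) * ∑' i : ℕ, (2⁻¹ : ℝ≥0∞) ^ i := by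
            rw [← ENNReal.tsum_mul_left]; congr 1; ext i; rw [pow_add]
        _ = (2⁻¹ : ℝ≥0∞) ^ (j + 1) * 2 := by
            rw [ENNReal.tsum_geometric, ENNReal.one_sub_inv_two, inv_inv]
        _ = (2⁻¹ : ℝ≥0∞) ^ j := by
            rw [pow_succ, mul_assoc, ENNReal.inv_mul_cancel two_ne_zero ENNReal.ofNat_ne_top,
              mul_one]
    have htendsto : Tendsto (fun j : ℕ => (2⁻¹ : ℝ≥0∞) ^ j) atTop (nhds 0) :=
      ENNReal.tendsto_pow_atTop_nhds_zero_of_lt_one (by simp [ENNReal.inv_lt_one])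
    exact le_antisymm (ge_of_tendsto' htendsto hbound) (by simp)
  have h0 : exhNorm φ₁ C = 0 := hExh hC2
  exact absurd (hC1.trans h0.le) (not_le.mpr hεpos)

/-- If `φ₁, φ₂` are lscsms with `Exh(φ₁) = Exh(φ₂)`, then the pseudometrics
`d_{‖·‖_{φ₁}}` and `d_{‖·‖_{φ₂}}` are topologically equivalent. -/
theorem topologically_equivalent_of_exh_eq
    (φ₁ φ₂ : Set ℕ → ℝ≥0∞)
    (hφ₁0 : φ₁ ∅ = 0)
    (hφ₁mono : ∀ A B : Set ℕ, A ⊆ B → φ₁ A ≤ φ₁ B)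
    (hφ₁sub : ∀ A B : Set ℕ, φ₁ (A ∪ B) ≤ φ₁ A + φ₁ B)
    (hφ₁fin : ∀ F : Set ℕ, F.Finite → φ₁ F ≠ ⊤)
    (hφ₁lsc : ∀ A : Set ℕ, φ₁ A = ⨆ n : ℕ, φ₁ (A ∩ Set.Iio n))
    (hφ₂0 : φ₂ ∅ = 0)
    (hφ₂mono : ∀ A B : Set ℕ, A ⊆ B → φ₂ A ≤ φ₂ B)
    (hφ₂sub : ∀ A B : Set ℕ, φ₂ (A ∪ B) ≤ φ₂ A + φ₂ B)
    (hφ₂fin : ∀ F : Set ℕ, F.Finite → φ₂ F ≠ ⊤)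
    (hφ₂lsc : ∀ A : Set ℕ, φ₂ A = ⨆ n : ℕ, φ₂ (A ∩ Set.Iio n))
    (hExh : Exh φ₁ = Exh φ₂) :
    ∀ (A : ℕ → Set ℕ) (L : Set ℕ),
      Tendsto (fun n => exhNorm φ₁ (symmDiff (A n) L)) atTop (nhds 0) ↔
      Tendsto (fun n => exhNorm φ₂ (symmDiff (A n) L)) atTop (nhds 0) := by
  intro A L
  constructor
  · exact key_lemma φ₂ φ₁ hφ₂mono hφ₂lsc hφ₁0 hφ₁mono hφ₁sub hφ₁lsc hExh.le
      (fun n => symmDiff (A n) L)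
  · exact key_lemma φ₁ φ₂ hφ₁mono hφ₁lsc hφ₂0 hφ₂mono hφ₂sub hφ₂lsc hExh.ge
      (fun n => symmDiff (A n) L)
end

section
/- Let φ₁, φ₂ : 𝒫(ℕ) → [0,∞] be lower semicontinuous submeasures. Then Exh(φ₁) = Exh(φ₂) if and only if for every sequence (F_n)_{n∈ℕ} of pairwise disjoint finite subsets of ℕ, one has lim_{n→∞} φ₁(F_n) = 0 if and only if lim_{n→∞} φ₂(F_n) = 0. -/
open Filter Topology
open scoped ENNReal

lemma myFinUnion (φ : Set ℕ → ℝ≥0∞) (h0 : φ ∅ = 0)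
    (hmono : ∀ A B : Set ℕ, A ⊆ B → φ A ≤ φ B)
    (hsub : ∀ A B : Set ℕ, φ (A ∪ B) ≤ φ A + φ B)
    (s : Finset ℕ) (G : ℕ → Set ℕ) :
    φ (⋃ i ∈ s, G i) ≤ ∑ i ∈ s, φ (G i) := by
  classical
  induction s using Finset.induction with
  | empty => simp [h0]
  | insert _ _ h ih =>
    rw [Finset.sum_insert h, Finset.set_biUnion_insert]
    exact (hsub _ _).trans (add_le_add_right ih _)

lemma myCtblUnion (φ : Set ℕ → ℝ≥0∞) (h0 : φ ∅ = 0)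
    (hmono : ∀ A B : Set ℕ, A ⊆ B → φ A ≤ φ B)
    (hsub : ∀ A B : Set ℕ, φ (A ∪ B) ≤ φ A + φ B)
    (hlsc : ∀ A : Set ℕ, φ A = ⨆ n : ℕ, φ (A ∩ Set.Iio n))
    (G : ℕ → Set ℕ) : φ (⋃ i, G i) ≤ ∑' i, φ (G i) := by
  classical
  rw [hlsc]
  refine iSup_le fun m => ?_
  have hT : ((⋃ i, G i) ∩ Set.Iio m).Finite :=
    (Set.finite_Iio m).subset Set.inter_subset_right
  have hx : ∀ x ∈ (⋃ i, G i) ∩ Set.Iio m, ∃ i, x ∈ G i := fun x hx => Set.mem_iUnion.mp hx.1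
  choose! f hf using hx
  have hsub' : (⋃ i, G i) ∩ Set.Iio m ⊆ ⋃ i ∈ hT.toFinset.image f, G i := by
    intro x hxm
    exact Set.mem_biUnion (Finset.mem_image_of_mem f (hT.mem_toFinset.mpr hxm)) (hf x hxm)
  calc φ ((⋃ i, G i) ∩ Set.Iio m) ≤ φ (⋃ i ∈ hT.toFinset.image f, G i) := hmono _ _ hsub'
    _ ≤ ∑ i ∈ hT.toFinset.image f, φ (G i) := myFinUnion φ h0 hmono hsub _ G
    _ ≤ ∑' i, φ (G i) := ENNReal.sum_le_tsum _

lemma myForward (φ₁ φ₂ : Set ℕ → ℝ≥0∞)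
    (hφ₁0 : φ₁ ∅ = 0)
    (hφ₁mono : ∀ A B : Set ℕ, A ⊆ B → φ₁ A ≤ φ₁ B)
    (hφ₁sub : ∀ A B : Set ℕ, φ₁ (A ∪ B) ≤ φ₁ A + φ₁ B)
    (hφ₁lsc : ∀ A : Set ℕ, φ₁ A = ⨆ n : ℕ, φ₁ (A ∩ Set.Iio n))
    (hφ₂mono : ∀ A B : Set ℕ, A ⊆ B → φ₂ A ≤ φ₂ B)
    (hE : Exh φ₁ = Exh φ₂)
    (F : ℕ → Set ℕ) (hfin : ∀ n, (F n).Finite)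
    (hdisj : Pairwise fun m n => Disjoint (F m) (F n))
    (h1 : Tendsto (fun n => φ₁ (F n)) atTop (nhds 0)) :
    Tendsto (fun n => φ₂ (F n)) atTop (nhds 0) := by
  by_contra h2
  rw [ENNReal.tendsto_nhds_zero] at h2
  push_neg at h2
  obtain ⟨ε, hε, h2⟩ := h2
  have h2' : ∃ᶠ n in atTop, ε < φ₂ (F n) := h2
  have hfreq : ∀ k : ℕ, ∃ᶠ n in atTop, φ₁ (F n) ≤ (2⁻¹ : ℝ≥0∞) ^ k ∧ ε < φ₂ (F n) := by
    intro k
    have hev : ∀ᶠ n in atTop, φ₁ (F n) ≤ (2⁻¹ : ℝ≥0∞) ^ k :=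
      ENNReal.tendsto_nhds_zero.mp h1 _ (ENNReal.pow_pos (by norm_num) k)
    exact (h2'.and_eventually hev).mono fun n hn => ⟨hn.2, hn.1⟩
  obtain ⟨e, he, hP⟩ := Filter.extraction_forall_of_frequently hfreq
  set G : ℕ → Set ℕ := fun k => F (e k) with hG
  set A : Set ℕ := ⋃ k, G k with hA
  have hGdisj : Pairwise fun k l => Disjoint (G k) (G l) :=
    fun k l hkl => hdisj (he.injective.ne hkl)
  -- A ∈ Exh φ₁
  have hAexh : exhNorm φ₁ A = 0 := by
    refine le_antisymm ?_ zero_le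
    have key : ∀ K : ℕ, exhNorm φ₁ A ≤ (2⁻¹ : ℝ≥0∞) ^ K * 2 := by
      intro K
      have hB : (⋃ k ∈ Finset.range K, G k).Finite :=
        Set.Finite.biUnion (Finset.range K).finite_toSet fun k _ => hfin (e k)
      obtain ⟨N, hN⟩ := hB.bddAbove
      have hsub' : A \ Set.Iio (N + 1) ⊆ ⋃ k, G (K + k) := by
        rintro x ⟨hxA, hxN⟩
        obtain ⟨k, hk⟩ := Set.mem_iUnion.mp hxA
        rcases lt_or_ge k K with hkK | hkK
        · exfalso
          have : x ∈ ⋃ k ∈ Finset.range K, G k :=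
            Set.mem_biUnion (Finset.mem_range.mpr hkK) hk
          exact hxN (Set.mem_Iio.mpr (Nat.lt_succ_of_le (hN this)))
        · exact Set.mem_iUnion.mpr ⟨k - K, by rwa [Nat.add_sub_cancel' hkK]⟩
      have hsum : ∑' k : ℕ, ((2⁻¹ : ℝ≥0∞) ^ (K + k)) = (2⁻¹ : ℝ≥0∞) ^ K * 2 := by
        simp_rw [pow_add]
        rw [ENNReal.tsum_mul_left, ENNReal.tsum_geometric, ENNReal.one_sub_inv_two,
          inv_inv]
      calc exhNorm φ₁ A ≤ φ₁ (A \ Set.Iio (N + 1)) := iInf_le _ _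
        _ ≤ φ₁ (⋃ k, G (K + k)) := hφ₁mono _ _ hsub'
        _ ≤ ∑' k, φ₁ (G (K + k)) := myCtblUnion φ₁ hφ₁0 hφ₁mono hφ₁sub hφ₁lsc _
        _ ≤ ∑' k : ℕ, ((2⁻¹ : ℝ≥0∞) ^ (K + k)) :=
            ENNReal.tsum_le_tsum fun k => (hP (K + k)).1
        _ = (2⁻¹ : ℝ≥0∞) ^ K * 2 := hsum
    have htend : Tendsto (fun K : ℕ => (2⁻¹ : ℝ≥0∞) ^ K * 2) atTop (𝓝 0) := by
      have := ENNReal.Tendsto.mul_const (ENNReal.tendsto_pow_atTop_nhds_zero_of_lt_one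
        (by norm_num : (2⁻¹ : ℝ≥0∞) < 1)) (Or.inr (by norm_num : (2:ℝ≥0∞) ≠ ⊤))
      simpa using this
    exact ge_of_tendsto' htend key
  have hAexh2 : exhNorm φ₂ A = 0 := by
    have : A ∈ Exh φ₂ := hE ▸ hAexh
    exact this
  obtain ⟨N, hN⟩ : ∃ N, φ₂ (A \ Set.Iio N) < ε := by
    have : (⨅ n, φ₂ (A \ Set.Iio n)) < ε := by
      rw [show (⨅ n, φ₂ (A \ Set.Iio n)) = exhNorm φ₂ A from rfl, hAexh2]; exact hε
    exact iInf_lt_iff.mp this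
  have hS : {k | (G k ∩ Set.Iio N).Nonempty}.Finite := by
    have hsub' : {k | (G k ∩ Set.Iio N).Nonempty} ⊆ ⋃ x ∈ Set.Iio N, {k | x ∈ G k} := by
      rintro k ⟨x, hx1, hx2⟩
      exact Set.mem_biUnion hx2 hx1
    refine Set.Finite.subset (Set.Finite.biUnion (Set.finite_Iio N) fun x _ => ?_) hsub'
    refine Set.Subsingleton.finite fun k hk l hl => ?_
    by_contra hkl
    exact Set.disjoint_left.mp (hGdisj hkl) hk hl
  obtain ⟨k, hk⟩ := hS.infinite_compl.nonempty
  have hGk : G k ⊆ A \ Set.Iio N := by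
    intro x hx
    refine ⟨Set.mem_iUnion.mpr ⟨k, hx⟩, fun hxN => hk ⟨x, hx, hxN⟩⟩
  exact absurd ((hP k).2.trans_le (hφ₂mono _ _ hGk)) (not_lt.mpr hN.le)

lemma myBackward (φ₁ φ₂ : Set ℕ → ℝ≥0∞)
    (hφ₁mono : ∀ A B : Set ℕ, A ⊆ B → φ₁ A ≤ φ₁ B)
    (hφ₂mono : ∀ A B : Set ℕ, A ⊆ B → φ₂ A ≤ φ₂ B)
    (hφ₂lsc : ∀ A : Set ℕ, φ₂ A = ⨆ n : ℕ, φ₂ (A ∩ Set.Iio n))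
    (hcond : ∀ F : ℕ → Set ℕ, (∀ n, (F n).Finite) →
        (Pairwise fun m n => Disjoint (F m) (F n)) →
        Tendsto (fun n => φ₁ (F n)) atTop (nhds 0) →
        Tendsto (fun n => φ₂ (F n)) atTop (nhds 0)) :
    Exh φ₁ ⊆ Exh φ₂ := by
  intro A hA
  by_contra hA2
  have hA' : exhNorm φ₁ A = 0 := hA
  have hA2' : exhNorm φ₂ A ≠ 0 := hA2
  set ε := min (exhNorm φ₂ A) 1 with hεdef
  have hε0 : ε ≠ 0 := by
    simp only [hεdef, ne_eq, min_eq_iff]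
    push_neg
    exact ⟨fun h => absurd h hA2', fun h => absurd h one_ne_zero⟩
  have hεtop : ε ≠ ⊤ := ne_top_of_le_ne_top ENNReal.one_ne_top (min_le_right _ _)
  have hhalf : ε / 2 < ε := ENNReal.half_lt_self hε0 hεtop
  have step : ∀ m : ℕ, ∃ j, m < j ∧ ε / 2 < φ₂ (A ∩ Set.Ico m j) := by
    intro m
    have h1 : ε ≤ φ₂ (A \ Set.Iio m) := (min_le_left _ _).trans (iInf_le _ m)
    have h2 : ε / 2 < ⨆ j : ℕ, φ₂ ((A \ Set.Iio m) ∩ Set.Iio j) := by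
      rw [← hφ₂lsc]; exact hhalf.trans_le h1
    obtain ⟨j, hj⟩ := lt_iSup_iff.mp h2
    refine ⟨max j (m + 1), lt_of_lt_of_le (Nat.lt_succ_self m) (le_max_right _ _), ?_⟩
    refine hj.trans_le (hφ₂mono _ _ ?_)
    rintro x ⟨⟨hxA, hxm⟩, hxj⟩
    exact ⟨hxA, not_lt.mp hxm, lt_of_lt_of_le hxj (le_max_left _ _)⟩
  choose j hj1 hj2 using step
  set m : ℕ → ℕ := fun k => Nat.rec 0 (fun _ mk => j mk) k with hm
  have hmsucc : ∀ k, m (k + 1) = j (m k) := fun k => rfl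
  have hmlt : StrictMono m := strictMono_nat_of_lt_succ fun k => hj1 (m k)
  set F : ℕ → Set ℕ := fun k => A ∩ Set.Ico (m k) (m (k + 1)) with hF
  have hfin : ∀ k, (F k).Finite := fun k =>
    (Set.finite_Ico _ _).subset Set.inter_subset_right
  have hdisj : Pairwise fun k l => Disjoint (F k) (F l) := by
    have key : ∀ k l, k < l → Disjoint (F k) (F l) := by
      intro k l hkl
      rw [Set.disjoint_left]
      rintro x ⟨_, _, hx2⟩ ⟨_, hx3, _⟩
      exact absurd (hx2.trans_le ((hmlt.le_iff_le.mpr hkl).trans hx3)) (lt_irrefl x)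
    intro k l hkl
    rcases lt_or_gt_of_ne hkl with h | h
    · exact key k l h
    · exact (key l k h).symm
  have h1 : Tendsto (fun k => φ₁ (F k)) atTop (nhds 0) := by
    have hanti : Antitone fun n => φ₁ (A \ Set.Iio n) := fun a b hab =>
      hφ₁mono _ _ (Set.diff_subset_diff_right (Set.Iio_subset_Iio hab))
    have htend : Tendsto (fun n => φ₁ (A \ Set.Iio n)) atTop (𝓝 0) := by
      have := tendsto_atTop_iInf hanti
      rwa [show (⨅ n, φ₁ (A \ Set.Iio n)) = exhNorm φ₁ A from rfl, hA'] at this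
    have hcomp := htend.comp hmlt.tendsto_atTop
    refine tendsto_of_tendsto_of_tendsto_of_le_of_le tendsto_const_nhds hcomp
      (fun k => zero_le) fun k => hφ₁mono _ _ ?_
    rintro x ⟨hxA, hx1, _⟩
    exact ⟨hxA, fun hxm => absurd (hx1.trans_lt hxm) (lt_irrefl _)⟩
  have h2 := hcond F hfin hdisj h1
  have hev := h2.eventually (gt_mem_nhds (ENNReal.half_pos hε0))
  obtain ⟨k, hk⟩ := hev.exists
  have : ε / 2 < φ₂ (F k) := by
    rw [hF]
    simpa [hmsucc k] using hj2 (m k)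
  exact absurd this (not_lt.mpr hk.le)

/-- For lscsms `φ₁, φ₂`, one has `Exh(φ₁) = Exh(φ₂)` iff for every sequence
`(Fₙ)` of pairwise disjoint finite subsets of `ℕ`, `φ₁(Fₙ) → 0` iff `φ₂(Fₙ) → 0`. -/
theorem exh_eq_iff_disjoint_finite_sequences
    (φ₁ φ₂ : Set ℕ → ℝ≥0∞)
    (hφ₁0 : φ₁ ∅ = 0)
    (hφ₁mono : ∀ A B : Set ℕ, A ⊆ B → φ₁ A ≤ φ₁ B)
    (hφ₁sub : ∀ A B : Set ℕ, φ₁ (A ∪ B) ≤ φ₁ A + φ₁ B)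
    (hφ₁fin : ∀ F : Set ℕ, F.Finite → φ₁ F ≠ ⊤)
    (hφ₁lsc : ∀ A : Set ℕ, φ₁ A = ⨆ n : ℕ, φ₁ (A ∩ Set.Iio n))
    (hφ₂0 : φ₂ ∅ = 0)
    (hφ₂mono : ∀ A B : Set ℕ, A ⊆ B → φ₂ A ≤ φ₂ B)
    (hφ₂sub : ∀ A B : Set ℕ, φ₂ (A ∪ B) ≤ φ₂ A + φ₂ B)
    (hφ₂fin : ∀ F : Set ℕ, F.Finite → φ₂ F ≠ ⊤)
    (hφ₂lsc : ∀ A : Set ℕ, φ₂ A = ⨆ n : ℕ, φ₂ (A ∩ Set.Iio n)) :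
    Exh φ₁ = Exh φ₂ ↔
      ∀ F : ℕ → Set ℕ, (∀ n, (F n).Finite) →
        (Pairwise fun m n => Disjoint (F m) (F n)) →
        (Tendsto (fun n => φ₁ (F n)) atTop (nhds 0) ↔
         Tendsto (fun n => φ₂ (F n)) atTop (nhds 0)) := by
  constructor
  · intro hE F hfin hdisj
    constructor
    · exact myForward φ₁ φ₂ hφ₁0 hφ₁mono hφ₁sub hφ₁lsc hφ₂mono hE F hfin hdisj
    · exact myForward φ₂ φ₁ hφ₂0 hφ₂mono hφ₂sub hφ₂lsc hφ₁mono hE.symm F hfin hdisj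
  · intro hcond
    refine Set.Subset.antisymm ?_ ?_
    · exact myBackward φ₁ φ₂ hφ₁mono hφ₂mono hφ₂lsc
        fun F hf hd => (hcond F hf hd).mp
    · exact myBackward φ₂ φ₁ hφ₂mono hφ₁mono hφ₁lsc
        fun F hf hd => (hcond F hf hd).mpr
end

section
/- Let I_n := ℕ ∩ [2^n, 2^{n+1}) for n ∈ ℕ and set ‖A‖_ψ := limsup_{n→∞} |A ∩ I_n|/2^n for A ⊆ ℕ. Then for every A ⊆ ℕ one has d*(A) ≤ 16 · ‖A‖_ψ, where d* is the upper asymptotic density. -/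
open Filter Topology

/-- `‖A‖_ψ = limsup_n |A ∩ [2^n, 2^{n+1})| / 2^n`. -/
noncomputable def psiNorm (A : Set ℕ) : ℝ :=
  Filter.limsup
    (fun n : ℕ => ((A ∩ Set.Ico (2 ^ n) (2 ^ (n + 1))).ncard : ℝ) / 2 ^ n)
    Filter.atTop

lemma ncard_inter_Iio_le (A : Set ℕ) (n : ℕ) : (A ∩ Set.Iio n).ncard ≤ n := by
  have h1 : (A ∩ Set.Iio n).ncard ≤ (Set.Iio n).ncard :=
    Set.ncard_le_ncard Set.inter_subset_right (Set.finite_Iio n)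
  have h2 : (Set.Iio n : Set ℕ).ncard = n := by
    rw [← Finset.coe_Iio, Set.ncard_coe_finset, Nat.card_Iio]
  omega

lemma ncard_inter_Ico_le (A : Set ℕ) (n : ℕ) :
    (A ∩ Set.Ico (2 ^ n) (2 ^ (n + 1))).ncard ≤ 2 ^ n := by
  have h1 : (A ∩ Set.Ico (2 ^ n) (2 ^ (n + 1))).ncard
      ≤ (Set.Ico (2 ^ n) (2 ^ (n + 1)) : Set ℕ).ncard :=
    Set.ncard_le_ncard Set.inter_subset_right (Set.finite_Ico _ _)
  have h2 : (Set.Ico (2 ^ n) (2 ^ (n + 1)) : Set ℕ).ncard = 2 ^ n := by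
    rw [← Finset.coe_Ico, Set.ncard_coe_finset, Nat.card_Ico]
    have : 2 ^ (n + 1) = 2 * 2 ^ n := by ring
    omega
  omega

/-- For every `A ⊆ ℕ`, `d*(A) ≤ 16 · ‖A‖_ψ`. -/
theorem upperAsymptoticDensity_le_sixteen_mul_psiNorm (A : Set ℕ) :
    upperAsymptoticDensity A ≤ 16 * psiNorm A := by
  set g : ℕ → ℝ := fun n => ((A ∩ Set.Ico (2 ^ n) (2 ^ (n + 1))).ncard : ℝ) / 2 ^ n with hg
  set f : ℕ → ℝ := fun n => ((A ∩ Set.Iio n).ncard : ℝ) / n with hf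
  have hg_nonneg : ∀ n, 0 ≤ g n := fun n => by positivity
  have hg_le_one : ∀ n, g n ≤ 1 := by
    intro n
    rw [hg]
    rw [div_le_one (by positivity)]
    exact_mod_cast ncard_inter_Ico_le A n
  have hgbdd : IsBoundedUnder (· ≤ ·) atTop g :=
    isBoundedUnder_of ⟨1, hg_le_one⟩
  have hL_nonneg : 0 ≤ psiNorm A :=
    le_limsup_of_frequently_le (Frequently.of_forall fun n => hg_nonneg n) hgbdd
  set L := psiNorm A
  have hf_nonneg : ∀ n, 0 ≤ f n := fun n => by positivity
  have hfcobdd : IsCoboundedUnder (· ≤ ·) atTop f :=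
    isCoboundedUnder_le_of_le atTop hf_nonneg
  -- main step: d* ≤ 2L + 3ε for every ε > 0
  have key : ∀ ε : ℝ, 0 < ε → upperAsymptoticDensity A ≤ 2 * L + 3 * ε := by
    intro ε hε
    have hlt : limsup g atTop < L + ε := by
      have h : limsup g atTop = L := rfl
      rw [h]; linarith
    obtain ⟨N, hN⟩ := (eventually_lt_of_limsup_lt hlt hgbdd).exists_forall_of_atTop
    have hLε : (0 : ℝ) ≤ L + ε := by linarith
    -- counting bound
    have count : ∀ t : ℕ,
        ((A ∩ Set.Iio (2 ^ (N + t))).ncard : ℝ) ≤ 2 ^ N + (L + ε) * 2 ^ (N + t) := by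
      intro t
      induction t with
      | zero =>
        have := ncard_inter_Iio_le A (2 ^ N)
        have h2 : (0 : ℝ) ≤ (L + ε) * 2 ^ N := by positivity
        have : ((A ∩ Set.Iio (2 ^ N)).ncard : ℝ) ≤ 2 ^ N := by exact_mod_cast this
        simpa using by linarith
      | succ t ih =>
        have hsplit : A ∩ Set.Iio (2 ^ (N + t + 1)) ⊆
            (A ∩ Set.Iio (2 ^ (N + t))) ∪ (A ∩ Set.Ico (2 ^ (N + t)) (2 ^ (N + t + 1))) := by
          intro x hx
          rcases lt_or_ge x (2 ^ (N + t)) with h | h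
          · exact Or.inl ⟨hx.1, h⟩
          · exact Or.inr ⟨hx.1, h, hx.2⟩
        have hfin : ((A ∩ Set.Iio (2 ^ (N + t))) ∪
            (A ∩ Set.Ico (2 ^ (N + t)) (2 ^ (N + t + 1)))).Finite :=
          (((Set.finite_Iio _).inter_of_right A).union
            ((Set.finite_Ico _ _).inter_of_right A))
        have h1 : (A ∩ Set.Iio (2 ^ (N + t + 1))).ncard ≤
            (A ∩ Set.Iio (2 ^ (N + t))).ncard +
            (A ∩ Set.Ico (2 ^ (N + t)) (2 ^ (N + t + 1))).ncard :=
          le_trans (Set.ncard_le_ncard hsplit hfin) (Set.ncard_union_le _ _)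
        have h2 : ((A ∩ Set.Ico (2 ^ (N + t)) (2 ^ (N + t + 1))).ncard : ℝ)
            ≤ (L + ε) * 2 ^ (N + t) := by
          have := hN (N + t) (Nat.le_add_right N t)
          rw [hg, div_lt_iff₀ (by positivity)] at this
          have hle := this.le
          linarith [hle]
        have h1' : ((A ∩ Set.Iio (2 ^ (N + t + 1))).ncard : ℝ) ≤
            ((A ∩ Set.Iio (2 ^ (N + t))).ncard : ℝ) +
            ((A ∩ Set.Ico (2 ^ (N + t)) (2 ^ (N + t + 1))).ncard : ℝ) := by
          exact_mod_cast h1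
        have : (2 : ℝ) ^ (N + (t + 1)) = 2 * 2 ^ (N + t) := by ring
        rw [show N + (t + 1) = N + t + 1 from rfl] at *
        rw [show (2 : ℝ) ^ (N + t + 1) = 2 * 2 ^ (N + t) from by ring]
        nlinarith [ih, h1', h2]
    -- choose M with 2^N ≤ ε * 2^M and M ≥ N
    obtain ⟨M₀, hM₀⟩ := pow_unbounded_of_one_lt ((2 : ℝ) ^ N / ε) (by norm_num : (1:ℝ) < 2)
    set M := max M₀ N
    have hM : (2 : ℝ) ^ N ≤ ε * 2 ^ M := by
      have h2M : (2 : ℝ) ^ M₀ ≤ 2 ^ M := by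
        apply pow_le_pow_right₀ (by norm_num) (le_max_left _ _)
      have : (2 : ℝ) ^ N / ε < 2 ^ M := lt_of_lt_of_le hM₀ h2M
      rw [div_lt_iff₀ hε] at this
      nlinarith
    -- eventual bound on f
    have hev : ∀ᶠ n in atTop, f n ≤ 2 * L + 3 * ε := by
      filter_upwards [eventually_ge_atTop (2 ^ M)] with n hn
      have hn1 : 1 ≤ n := le_trans (Nat.one_le_two_pow) hn
      set m := Nat.log 2 n with hm
      have hmM : M ≤ m := (Nat.le_log_iff_pow_le (by norm_num) (by omega)).mpr hn
      have hmN : N ≤ m := le_trans (le_max_right _ _) hmM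
      have hlow : 2 ^ m ≤ n := Nat.pow_log_le_self 2 (by omega)
      have hhigh : n < 2 ^ (m + 1) := Nat.lt_pow_succ_log_self (by norm_num) n
      -- monotonicity of count
      have hsub : (A ∩ Set.Iio n).ncard ≤ (A ∩ Set.Iio (2 ^ (m + 1))).ncard :=
        Set.ncard_le_ncard (Set.inter_subset_inter_right A
          (Set.Iio_subset_Iio hhigh.le)) ((Set.finite_Iio _).inter_of_right A)
      have hcnt : ((A ∩ Set.Iio (2 ^ (m + 1))).ncard : ℝ) ≤ 2 ^ N + (L + ε) * 2 ^ (m + 1) := by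
        have := count (m + 1 - N)
        rw [show N + (m + 1 - N) = m + 1 by omega] at this
        exact this
      have hfn : f n ≤ (2 ^ N + (L + ε) * 2 ^ (m + 1)) / 2 ^ m := by
        rw [hf]
        apply div_le_div₀ (by positivity) ?_ (by positivity) (by exact_mod_cast hlow)
        calc ((A ∩ Set.Iio n).ncard : ℝ) ≤ ((A ∩ Set.Iio (2 ^ (m + 1))).ncard : ℝ) := by
              exact_mod_cast hsub
          _ ≤ _ := hcnt
      have hsplit2 : ((2 : ℝ) ^ N + (L + ε) * 2 ^ (m + 1)) / 2 ^ m
          = 2 ^ N / 2 ^ m + 2 * (L + ε) := by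
        field_simp
        ring
      have h2Nm : (2 : ℝ) ^ N / 2 ^ m ≤ ε := by
        rw [div_le_iff₀ (by positivity)]
        calc (2 : ℝ) ^ N ≤ ε * 2 ^ M := hM
          _ ≤ ε * 2 ^ m := by
              have : (2 : ℝ) ^ M ≤ 2 ^ m := pow_le_pow_right₀ (by norm_num) hmM
              nlinarith
      calc f n ≤ 2 ^ N / 2 ^ m + 2 * (L + ε) := by rw [← hsplit2]; exact hfn
        _ ≤ ε + 2 * (L + ε) := by linarith
        _ = 2 * L + 3 * ε := by ring
    exact limsup_le_of_le hfcobdd hev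
  have h2L : upperAsymptoticDensity A ≤ 2 * L := by
    by_contra h
    push_neg at h
    set δ := (upperAsymptoticDensity A - 2 * L) / 4 with hδ
    have hδpos : 0 < δ := by simp [hδ]; linarith
    have := key δ hδpos
    simp [hδ] at this
    linarith
  have : 2 * L ≤ 16 * L := by linarith
  linarith
end

section
/- Let φ : 𝒫(ℕ) → [0,∞] be a lower semicontinuous submeasure. Then Exh(φ) is closed in the pseudometric space (𝒫(ℕ), d_{‖·‖_φ}): if (A_n)_{n∈ℕ} is a sequence with A_n ∈ Exh(φ) for all n and lim_{n→∞} ‖A_n △ A‖_φ = 0 for some A ⊆ ℕ, then A ∈ Exh(φ). -/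
open Filter Topology
open scoped ENNReal

/-- For any lscsm `φ`, the ideal `Exh(φ)` is closed in the pseudometric
space `(𝒫(ℕ), d_{‖·‖_φ})`. -/
theorem exh_closed
    (φ : Set ℕ → ℝ≥0∞)
    (hφ0 : φ ∅ = 0)
    (hφmono : ∀ A B : Set ℕ, A ⊆ B → φ A ≤ φ B)
    (hφsub : ∀ A B : Set ℕ, φ (A ∪ B) ≤ φ A + φ B)
    (hφfin : ∀ F : Set ℕ, F.Finite → φ F ≠ ⊤)
    (hφlsc : ∀ A : Set ℕ, φ A = ⨆ n : ℕ, φ (A ∩ Set.Iio n)) :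
    ∀ (A : ℕ → Set ℕ) (L : Set ℕ), (∀ n, A n ∈ Exh φ) →
      Tendsto (fun n => exhNorm φ (symmDiff (A n) L)) atTop (nhds 0) →
      L ∈ Exh φ := by
  intro A L hA hT
  have key : ∀ n, exhNorm φ L ≤ exhNorm φ (symmDiff (A n) L) := by
    intro n
    have hsub : ∀ m k : ℕ,
        φ (L \ Set.Iio (max m k)) ≤
          φ (A n \ Set.Iio m) + φ (symmDiff (A n) L \ Set.Iio k) := by
      intro m k
      refine le_trans (hφmono _ _ ?_) (hφsub _ _)
      intro x hx
      rcases hx with ⟨hxL, hxI⟩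
      simp only [Set.mem_Iio, not_lt, max_le_iff] at hxI
      by_cases hxA : x ∈ A n
      · exact Or.inl ⟨hxA, by simpa using hxI.1⟩
      · exact Or.inr ⟨Or.inr ⟨hxL, hxA⟩, by simpa using hxI.2⟩
    have h1 : exhNorm φ L ≤
        ⨅ m : ℕ, ⨅ k : ℕ, (φ (A n \ Set.Iio m) + φ (symmDiff (A n) L \ Set.Iio k)) := by
      refine le_iInf fun m => le_iInf fun k => ?_
      exact le_trans (iInf_le _ (max m k)) (hsub m k)
    calc exhNorm φ L ≤ _ := h1
      _ = exhNorm φ (A n) + exhNorm φ (symmDiff (A n) L) := by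
          simp_rw [← ENNReal.add_iInf, ← ENNReal.iInf_add]; rfl
      _ = exhNorm φ (symmDiff (A n) L) := by rw [hA n, zero_add]
  have : exhNorm φ L ≤ 0 := ge_of_tendsto hT (Filter.Eventually.of_forall key)
  exact le_antisymm this zero_le
end

section
/- There exists a set B ⊆ ℕ which is a countable union of infinite arithmetic progressions (i.e., B = ⋃_{n∈ℕ} (k_n·ℕ + h_n) for some k_n, h_n ∈ ℕ with k_n ≠ 0) such that bd_*(B) ≤ 1/4 and bd*(B) ≥ 1/2, where bd* is the upper Banach density and bd_*(B) := 1 − bd*(ℕ \ B) is the lower Banach density. In particular, B does not have a Banach density (bd_*(B) ≠ bd*(B)). -/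
open Filter Topology

/-- The lower Banach density `bd_*(A) = 1 - bd*(ℕ \ A)`. -/
noncomputable def lowerBanachDensity (A : Set ℕ) : ℝ :=
  1 - upperBanachDensity Aᶜ

/-! ### Auxiliary construction -/

def kAP (n : ℕ) : ℕ := 4 ^ (n.unpair.1 + 3)
def hAP (n : ℕ) : ℕ := 2 * 4 ^ (n.unpair.1 + 2) + 2 * min n.unpair.2 n.unpair.1

def Bset : Set ℕ := ⋃ n : ℕ, Set.range (fun m : ℕ => kAP n * m + hAP n)

lemma mem_Bset {x : ℕ} :
    x ∈ Bset ↔ ∃ N j m : ℕ, j ≤ N ∧ x = 4 ^ (N + 3) * m + (2 * 4 ^ (N + 2) + 2 * j) := by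
  simp only [Bset, Set.mem_iUnion, Set.mem_range, kAP, hAP]
  constructor
  · rintro ⟨n, m, rfl⟩
    exact ⟨n.unpair.1, min n.unpair.2 n.unpair.1, m, min_le_right _ _, by ring⟩
  · rintro ⟨N, j, m, hj, rfl⟩
    exact ⟨Nat.pair N j, m, by simp [Nat.unpair_pair, min_eq_left hj]⟩

lemma N_lt_c (N : ℕ) : N < 2 * 4 ^ (N + 2) := by
  have h1 : N < 2 ^ N := Nat.lt_two_pow_self (n := N)
  have h2 : (2:ℕ) ^ N ≤ 4 ^ (N + 2) := by
    calc (2:ℕ)^N ≤ 4^N := Nat.pow_le_pow_left (by norm_num) N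
    _ ≤ 4^(N+2) := Nat.pow_le_pow_right (by norm_num) (by omega)
  omega

lemma sparse_count (X : ℕ) : ((Bset ∩ Set.Ico 0 X).ncard : ℝ) ≤ X / 4 := by
  classical
  set R : ℕ → ℕ := fun N => if 2 * 4 ^ (N + 2) < X then X / 4 ^ (N + 3) + 1 else 0 with hR
  set F : Finset ℕ := (Finset.range X).biUnion (fun N =>
    (Finset.range (R N) ×ˢ Finset.range (N + 1)).image
      (fun p => 4 ^ (N + 3) * p.1 + (2 * 4 ^ (N + 2) + 2 * p.2))) with hF
  have hsub : Bset ∩ Set.Ico 0 X ⊆ ↑F := by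
    rintro x ⟨hxB, -, hxX⟩
    obtain ⟨N, j, m, hj, rfl⟩ := mem_Bset.1 hxB
    have hc : 2 * 4 ^ (N + 2) < X := by omega
    have hNX : N < X := lt_trans (N_lt_c N) (by omega)
    have hm : m < R N := by
      have hP : 0 < 4 ^ (N + 3) := by positivity
      have : m * 4 ^ (N + 3) ≤ X := by rw [mul_comm]; omega
      have := (Nat.le_div_iff_mul_le hP).2 this
      simp only [hR, if_pos hc]
      omega
    simp only [hF, Finset.coe_biUnion, Set.mem_iUnion, Finset.mem_coe, Finset.mem_range]
    refine ⟨N, hNX, ?_⟩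
    simp only [Finset.mem_image, Finset.mem_product, Finset.mem_range]
    exact ⟨(m, j), ⟨hm, by omega⟩, rfl⟩
  have hcard : (Bset ∩ Set.Ico 0 X).ncard ≤ F.card := by
    rw [← Set.ncard_coe_finset F]
    exact Set.ncard_le_ncard hsub F.finite_toSet
  have hFcard : F.card ≤ ∑ N ∈ Finset.range X, R N * (N + 1) := by
    refine le_trans (Finset.card_biUnion_le) (Finset.sum_le_sum fun N _ => ?_)
    refine le_trans Finset.card_image_le ?_
    simp [Finset.card_product]
  have hterm : ∀ N, ((R N * (N + 1) : ℕ) : ℝ) ≤ (3 * X / 64) * (1/2)^N := by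
    intro N
    by_cases hc : 2 * 4 ^ (N + 2) < X
    · have h1 : ((R N : ℕ) : ℝ) ≤ 3 * X / 4 ^ (N + 3) := by
        simp only [hR, if_pos hc]
        push_cast
        have hdiv : ((X / 4 ^ (N + 3) : ℕ) : ℝ) ≤ (X : ℝ) / 4 ^ (N + 3) := by
          exact_mod_cast Nat.cast_div_le
        have h2 : (1:ℝ) ≤ 2 * X / 4 ^ (N + 3) := by
          rw [le_div_iff₀ (by positivity)]
          have : (4:ℝ) ^ (N + 3) ≤ 2 * X := by
            have : (4:ℕ) ^ (N + 3) ≤ 2 * X := by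
              have : (4:ℕ)^(N+3) = 4 * 4^(N+2) := by ring
              omega
            exact_mod_cast this
          linarith
        calc ((X / 4 ^ (N + 3) : ℕ) : ℝ) + 1 ≤ (X:ℝ)/4^(N+3) + 2*X/4^(N+3) := add_le_add hdiv h2
          _ = 3 * X / 4^(N+3) := by ring
      have h3 : ((N : ℝ) + 1) ≤ 2 ^ N := by
        exact_mod_cast Nat.lt_two_pow_self (n := N)
      have h4 : ((R N * (N + 1) : ℕ) : ℝ) = (R N : ℝ) * ((N:ℝ) + 1) := by push_cast; ring
      rw [h4]
      have hmul : (R N : ℝ) * ((N:ℝ) + 1) ≤ (3 * X / 4 ^ (N + 3)) * 2 ^ N := by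
        apply mul_le_mul h1 h3 (by positivity) (by positivity)
      refine hmul.trans (le_of_eq ?_)
      have h5 : (4:ℝ) ^ (N + 3) = 64 * 4 ^ N := by rw [pow_add]; ring
      have h6 : (4:ℝ) ^ N = 2 ^ N * 2 ^ N := by rw [← mul_pow]; norm_num
      rw [h5, h6]
      have h7 : (2:ℝ) ^ N ≠ 0 := by positivity
      field_simp
      rw [mul_assoc, ← mul_pow]; norm_num
    · simp only [hR, if_neg hc, zero_mul, Nat.cast_zero]
      positivity
  have hsum : ((∑ N ∈ Finset.range X, R N * (N + 1) : ℕ) : ℝ) ≤ 3 * X / 32 := by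
    push_cast
    calc (∑ N ∈ Finset.range X, (R N : ℝ) * ((N:ℝ) + 1))
        ≤ ∑ N ∈ Finset.range X, (3 * (X:ℝ) / 64) * ((1:ℝ)/2)^N := by
          refine Finset.sum_le_sum fun N _ => ?_
          have := hterm N
          push_cast at this
          linarith
      _ = (3 * (X:ℝ) / 64) * ∑ N ∈ Finset.range X, (1/2:ℝ)^N := by rw [Finset.mul_sum]
      _ ≤ (3 * (X:ℝ) / 64) * 2 := by
          refine mul_le_mul_of_nonneg_left ?_ (by positivity)
          rw [geom_sum_eq (by norm_num)]
          have : (0:ℝ) ≤ (1/2)^X := by positivity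
          rw [div_le_iff_of_neg (by norm_num)]
          linarith
      _ = 3 * (X:ℝ) / 32 := by ring
  have hmain : ((Bset ∩ Set.Ico 0 X).ncard : ℝ) ≤ 3 * X / 32 := by
    refine le_trans ?_ hsum
    exact_mod_cast le_trans hcard hFcard
  have hX : (0:ℝ) ≤ X := by positivity
  linarith

lemma dense_count (n : ℕ) :
    ((n / 2 + 1 : ℕ) : ℝ) ≤
      ((Bset ∩ Set.Ico (2 * 4 ^ (n + 2)) (2 * 4 ^ (n + 2) + (n + 1))).ncard : ℝ) := by
  classical
  set c := 2 * 4 ^ (n + 2) with hc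
  set F : Finset ℕ := (Finset.range (n / 2 + 1)).image (fun j => c + 2 * j) with hF
  have hFcard : F.card = n / 2 + 1 := by
    rw [hF, Finset.card_image_of_injective _ (fun a b h => by omega), Finset.card_range]
  have hsub : ↑F ⊆ Bset ∩ Set.Ico c (c + (n + 1)) := by
    intro x hx
    simp only [hF, Finset.coe_image, Set.mem_image, Finset.mem_coe, Finset.mem_range] at hx
    obtain ⟨j, hj, rfl⟩ := hx
    refine ⟨mem_Bset.2 ⟨n, j, 0, by omega, by ring⟩, ?_⟩
    simp only [Set.mem_Ico]
    omega
  have hfin : (Bset ∩ Set.Ico c (c + (n + 1))).Finite :=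
    (Set.finite_Ico _ _).inter_of_right _
  have := Set.ncard_le_ncard hsub hfin
  rw [Set.ncard_coe_finset, hFcard] at this
  exact_mod_cast this

lemma count_bdd (A : Set ℕ) (n : ℕ) :
    BddAbove (Set.range fun k : ℕ =>
      ((A ∩ Set.Ico k (k + (n + 1))).ncard : ℝ) / (n + 1)) := by
  refine ⟨1, ?_⟩
  rintro x ⟨k, rfl⟩
  have h1 : (A ∩ Set.Ico k (k + (n + 1))).ncard ≤ n + 1 := by
    have h0 : (Set.Ico k (k + (n + 1)) : Set ℕ).ncard = n + 1 := by
      rw [← Finset.coe_Ico, Set.ncard_coe_finset, Nat.card_Ico]; omega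
    have := Set.ncard_le_ncard (Set.inter_subset_right (s := A))
      (Set.finite_Ico k (k + (n + 1)))
    rwa [h0] at this
  rw [div_le_one (by positivity)]
  exact_mod_cast le_trans h1 (by push_cast; omega)

lemma upper_Bset : 1 / 2 ≤ upperBanachDensity Bset := by
  refine le_ciInf fun n => ?_
  refine le_ciSup_of_le (count_bdd Bset n) (2 * 4 ^ (n + 2)) ?_
  rw [le_div_iff₀ (by positivity)]
  have h1 := dense_count n
  have h2 : (n : ℝ) + 1 ≤ 2 * ((n / 2 + 1 : ℕ) : ℝ) := by
    have : n + 1 ≤ 2 * (n / 2 + 1) := by omega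
    exact_mod_cast this
  linarith

lemma upper_compl_Bset : 3 / 4 ≤ upperBanachDensity Bsetᶜ := by
  refine le_ciInf fun n => ?_
  refine le_ciSup_of_le (count_bdd Bsetᶜ n) 0 ?_
  have key := Set.ncard_inter_add_ncard_diff_eq_ncard (Set.Ico 0 (0 + (n + 1))) Bset
    (Set.finite_Ico _ _)
  have hIco : (Set.Ico 0 (0 + (n + 1)) : Set ℕ).ncard = n + 1 := by
    rw [← Finset.coe_Ico, Set.ncard_coe_finset, Nat.card_Ico]; omega
  have hdiff : Set.Ico 0 (0 + (n + 1)) \ Bset = Bsetᶜ ∩ Set.Ico 0 (0 + (n + 1)) := by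
    rw [Set.diff_eq, Set.inter_comm]
  have hBI : Set.Ico 0 (0 + (n + 1)) ∩ Bset = Bset ∩ Set.Ico 0 (0 + (n + 1)) :=
    Set.inter_comm _ _
  rw [hdiff, hBI, hIco] at key
  have hsp : ((Bset ∩ Set.Ico 0 (0 + (n + 1))).ncard : ℝ) ≤ ((n : ℝ) + 1) / 4 := by
    have := sparse_count (0 + (n + 1))
    simpa using this
  have hcount : ((Bsetᶜ ∩ Set.Ico 0 (0 + (n + 1))).ncard : ℝ)
      = ((n : ℝ) + 1) - ((Bset ∩ Set.Ico 0 (0 + (n + 1))).ncard : ℝ) := by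
    have : ((Bset ∩ Set.Ico 0 (0 + (n + 1))).ncard : ℝ)
        + ((Bsetᶜ ∩ Set.Ico 0 (0 + (n + 1))).ncard : ℝ) = (n : ℝ) + 1 := by
      exact_mod_cast congrArg (Nat.cast : ℕ → ℝ) key
    linarith
  rw [le_div_iff₀ (by positivity)]
  rw [hcount]
  linarith

/-- There is a countable union `B` of infinite arithmetic progressions with
`bd_*(B) ≤ 1/4` and `bd*(B) ≥ 1/2`; in particular `B` has no Banach density. -/
theorem exists_countable_union_AP_without_banach_density :
    ∃ B : Set ℕ,
      (∃ k h : ℕ → ℕ, (∀ n, k n ≠ 0) ∧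
        B = ⋃ n : ℕ, Set.range (fun m : ℕ => k n * m + h n)) ∧
      lowerBanachDensity B ≤ 1 / 4 ∧
      1 / 2 ≤ upperBanachDensity B ∧
      lowerBanachDensity B ≠ upperBanachDensity B := by
  refine ⟨Bset, ⟨kAP, hAP, fun n => pow_ne_zero _ (by norm_num), rfl⟩, ?_, upper_Bset, ?_⟩
  · have := upper_compl_Bset
    unfold lowerBanachDensity
    linarith
  · have h1 := upper_compl_Bset
    have h2 := upper_Bset
    unfold lowerBanachDensity
    intro h
    linarith
end

section
/- For a real number α > −1 and n ∈ ℕ, let A_n := ℕ ∩ ⋃_{i∈ℕ} [2^i, 2^i(1+2^{−n})) and let d_α*(A) := limsup_{m→∞} (Σ_{i ∈ A ∩ [1,m]} i^α) / (Σ_{i=1}^m i^α) denote the upper α-density of A ⊆ ℕ. Then for every n ∈ ℕ and every real α > −1, d_α*(A_n) ≥ 1 − (1+2^{−n})^{−α−1}. -/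
open Filter Topology

open Finset

noncomputable def Srpow (α : ℝ) (m : ℕ) : ℝ := ∑ i ∈ Finset.Icc 1 m, (i : ℝ) ^ α

lemma srpow_mono {α : ℝ} (hα : 0 ≤ α) (x : ℕ) :
    MonotoneOn (fun y : ℝ => y ^ α) (Set.Icc (((1:ℕ)):ℝ) ((x:ℕ):ℝ)) :=
  fun a ha b _ hab => Real.rpow_le_rpow (le_trans (by norm_num) ha.1) hab hα

lemma srpow_anti {α : ℝ} (hα : α < 0) (x : ℕ) :
    AntitoneOn (fun y : ℝ => y ^ α) (Set.Icc (((1:ℕ)):ℝ) ((x:ℕ):ℝ)) :=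
  fun a ha b _ hab => Real.rpow_le_rpow_of_nonpos (lt_of_lt_of_le (by norm_num) ha.1) hab hα.le

lemma shift_sum (α : ℝ) (m : ℕ) :
    ∑ i ∈ Finset.Ico 1 m, ((i + 1 : ℕ) : ℝ) ^ α = ∑ i ∈ Finset.Ico 2 (m+1), (i : ℝ) ^ α := by
  simpa using Finset.sum_Ico_add' (fun i : ℕ => (i : ℝ) ^ α) 1 m 1

lemma Srpow_lower {α : ℝ} (hα : -1 < α) (m : ℕ) (hm : 1 ≤ m) :
    ((m : ℝ) ^ (α + 1) - 1) / (α + 1) ≤ Srpow α m := by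
  have hint : ∫ x in (1 : ℕ)..(m : ℕ), (x : ℝ) ^ α = ((m:ℝ) ^ (α+1) - 1) / (α+1) := by
    rw [integral_rpow (Or.inl hα)]; norm_num
  rcases le_or_gt 0 α with h0 | h0
  · -- monotone : ∫_1^m ≤ ∑_{Ico 1 m} f (i+1) = ∑_{Ico 2 (m+1)} ≤ Srpow - 1 + 1
    have h1 := (srpow_mono h0 m).integral_le_sum_Ico (by exact_mod_cast hm)
    rw [hint, shift_sum] at h1
    have h2 : ∑ i ∈ Finset.Ico 2 (m+1), (i : ℝ) ^ α ≤ Srpow α m := by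
      rw [Finset.Ico_add_one_right_eq_Icc]
      apply Finset.sum_le_sum_of_subset_of_nonneg (Finset.Icc_subset_Icc_left (by norm_num))
      intro i _ _; positivity
    linarith
  · -- antitone : ∫_1^{m+1} ≤ ∑_{Ico 1 (m+1)} f i = Srpow α m; and m^{α+1} ≤ (m+1)^{α+1}
    have h1 := (srpow_anti h0 (m+1)).integral_le_sum_Ico (by omega)
    have hint2 : ∫ x in (1 : ℕ)..((m+1 : ℕ)), (x : ℝ) ^ α = (((m:ℝ)+1) ^ (α+1) - 1) / (α+1) := by
      rw [integral_rpow (Or.inl hα)]; push_cast; norm_num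
    rw [hint2] at h1
    have h2 : Srpow α m = ∑ i ∈ Finset.Ico 1 (m+1), (i : ℝ) ^ α := by
      rw [Finset.Ico_add_one_right_eq_Icc]; rfl
    have h3 : (m : ℝ) ^ (α+1) ≤ ((m:ℝ)+1) ^ (α+1) :=
      Real.rpow_le_rpow (by positivity) (by linarith) (by linarith)
    have h4 : ((m : ℝ) ^ (α + 1) - 1) / (α + 1) ≤ (((m:ℝ)+1) ^ (α+1) - 1) / (α+1) := by
      gcongr <;> linarith
    linarith [h2 ▸ h1]

lemma Srpow_upper {α : ℝ} (hα : -1 < α) (m : ℕ) (hm : 1 ≤ m) :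
    Srpow α m ≤ (((m : ℝ) + 1) ^ (α + 1) - 1) / (α + 1) + 1 := by
  rcases le_or_gt 0 α with h0 | h0
  · -- ∑_{Ico 1 (m+1)} f i ≤ ∫_1^{m+1}
    have h1 := (srpow_mono h0 (m+1)).sum_le_integral_Ico (by omega)
    have hint2 : ∫ x in (1 : ℕ)..((m+1 : ℕ)), (x : ℝ) ^ α = (((m:ℝ)+1) ^ (α+1) - 1) / (α+1) := by
      rw [integral_rpow (Or.inl hα)]; push_cast; norm_num
    rw [hint2] at h1
    have h2 : Srpow α m = ∑ i ∈ Finset.Ico 1 (m+1), (i : ℝ) ^ α := by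
      rw [Finset.Ico_add_one_right_eq_Icc]; rfl
    linarith [h2 ▸ h1]
  · -- ∑_{Ico 1 m} f(i+1) ≤ ∫_1^m ; Srpow = 1 + ∑_{Icc 2 m}
    have h1 := (srpow_anti h0 m).sum_le_integral_Ico (by exact_mod_cast hm)
    have hint : ∫ x in (1 : ℕ)..(m : ℕ), (x : ℝ) ^ α = ((m:ℝ) ^ (α+1) - 1) / (α+1) := by
      rw [integral_rpow (Or.inl hα)]; norm_num
    rw [hint, shift_sum] at h1
    have h2 : Srpow α m = 1 + ∑ i ∈ Finset.Ico 2 (m+1), (i : ℝ) ^ α := by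
      rw [Finset.Ico_add_one_right_eq_Icc, Srpow, Finset.Icc_eq_cons_Ioc hm, Finset.sum_cons,
        ← Finset.Icc_add_one_left_eq_Ioc]
      norm_num
    have h3 : (m : ℝ) ^ (α+1) ≤ ((m:ℝ)+1) ^ (α+1) :=
      Real.rpow_le_rpow (by positivity) (by linarith) (by linarith)
    have h4 : ((m : ℝ) ^ (α + 1) - 1) / (α + 1) ≤ (((m:ℝ)+1) ^ (α+1) - 1) / (α+1) := by
      gcongr <;> linarith
    linarith

lemma Srpow_tendsto {α : ℝ} (hα : -1 < α) :
    Tendsto (fun m : ℕ => Srpow α m / (m:ℝ) ^ (α + 1)) atTop (𝓝 ((α + 1)⁻¹)) := by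
  have hα1 : (0:ℝ) < α + 1 := by linarith
  have he : Tendsto (fun m : ℕ => ((m:ℝ) ^ (α + 1))⁻¹) atTop (𝓝 0) :=
    ((tendsto_rpow_atTop hα1).comp tendsto_natCast_atTop_atTop).inv_tendsto_atTop
  have hq : Tendsto (fun m : ℕ => (((m:ℝ) + 1) ^ (α + 1)) / ((m:ℝ) ^ (α + 1))) atTop (𝓝 1) := by
    have hinner : Tendsto (fun m : ℕ => ((m:ℝ) + 1) / (m:ℝ)) atTop (𝓝 1) := by
      have h0 : Tendsto (fun m : ℕ => 1 + 1 / (m:ℝ)) atTop (𝓝 (1 + 0)) :=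
        tendsto_const_nhds.add tendsto_one_div_atTop_nhds_zero_nat
      rw [add_zero] at h0
      apply h0.congr'
      filter_upwards [eventually_ge_atTop 1] with m hm
      have : (m:ℝ) ≠ 0 := by positivity
      field_simp
    have hc : Tendsto (fun x : ℝ => x ^ (α + 1)) (𝓝 1) (𝓝 1) := by
      have := (Real.continuousAt_rpow_const 1 (α + 1) (Or.inl one_ne_zero)).tendsto
      rwa [Real.one_rpow] at this
    have := hc.comp hinner
    apply this.congr'
    filter_upwards [eventually_ge_atTop 1] with m hm
    simp only [Function.comp_apply]
    rw [Real.div_rpow (by positivity) (Nat.cast_nonneg m)]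
  have hlo : Tendsto (fun m : ℕ => (1 - ((m:ℝ) ^ (α + 1))⁻¹) / (α + 1)) atTop (𝓝 ((α + 1)⁻¹)) := by
    have := ((tendsto_const_nhds : Tendsto (fun _ : ℕ => (1:ℝ)) atTop (𝓝 1)).sub he).div_const (α + 1)
    simpa using this
  have hhi : Tendsto (fun m : ℕ =>
      ((((m:ℝ) + 1) ^ (α + 1)) / ((m:ℝ) ^ (α + 1)) - ((m:ℝ) ^ (α + 1))⁻¹) / (α + 1)
        + ((m:ℝ) ^ (α + 1))⁻¹) atTop (𝓝 ((α + 1)⁻¹)) := by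
    have := ((hq.sub he).div_const (α + 1)).add he
    simpa using this
  apply tendsto_of_tendsto_of_tendsto_of_le_of_le' hlo hhi
  · filter_upwards [eventually_ge_atTop 1] with m hm
    have hm' : (0:ℝ) < (m:ℝ) := by exact_mod_cast hm
    have hpos : (0:ℝ) < (m:ℝ) ^ (α + 1) := Real.rpow_pos_of_pos hm' _
    have hl := Srpow_lower hα m hm
    have heq : (1 - ((m:ℝ) ^ (α + 1))⁻¹) / (α + 1)
        = (((m:ℝ) ^ (α + 1) - 1) / (α + 1)) / ((m:ℝ) ^ (α + 1)) := by
      generalize (m:ℝ) ^ (α + 1) = x at hpos ⊢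
      rw [eq_comm, div_right_comm, sub_div, div_self hpos.ne', one_div]
    rw [heq]
    gcongr
  · filter_upwards [eventually_ge_atTop 1] with m hm
    have hm' : (0:ℝ) < (m:ℝ) := by exact_mod_cast hm
    have hpos : (0:ℝ) < (m:ℝ) ^ (α + 1) := Real.rpow_pos_of_pos hm' _
    have hu := Srpow_upper hα m hm
    have heq : (((m:ℝ) + 1) ^ (α + 1) / ((m:ℝ) ^ (α + 1)) - ((m:ℝ) ^ (α + 1))⁻¹) / (α + 1)
          + ((m:ℝ) ^ (α + 1))⁻¹
        = ((((m:ℝ) + 1) ^ (α + 1) - 1) / (α + 1) + 1) / ((m:ℝ) ^ (α + 1)) := by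
      generalize (m:ℝ) ^ (α + 1) = x at hpos ⊢
      generalize ((m:ℝ) + 1) ^ (α + 1) = y
      rw [eq_comm, add_div, div_right_comm, sub_div, one_div]
    rw [heq]
    gcongr

lemma Srpow_pos {α : ℝ} {m : ℕ} (hm : 1 ≤ m) : 0 < Srpow α m := by
  apply Finset.sum_pos' (fun i _ => by positivity)
  exact ⟨1, Finset.mem_Icc.mpr ⟨le_refl 1, hm⟩, by norm_num⟩

lemma Srpow_ratio_tendsto {α : ℝ} (hα : -1 < α) {b c : ℕ → ℕ} {r : ℝ} (hr : 0 < r)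
    (hb : Tendsto b atTop atTop) (hc : Tendsto c atTop atTop)
    (hbc : Tendsto (fun k => (c k : ℝ) / (b k : ℝ)) atTop (𝓝 r)) :
    Tendsto (fun k => Srpow α (c k) / Srpow α (b k)) atTop (𝓝 (r ^ (α + 1))) := by
  have hα1 : (0:ℝ) < α + 1 := by linarith
  have h1 : Tendsto (fun k => Srpow α (c k) / (c k : ℝ) ^ (α + 1)) atTop (𝓝 ((α + 1)⁻¹)) :=
    (Srpow_tendsto hα).comp hc
  have h2 : Tendsto (fun k => Srpow α (b k) / (b k : ℝ) ^ (α + 1)) atTop (𝓝 ((α + 1)⁻¹)) :=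
    (Srpow_tendsto hα).comp hb
  have h3 : Tendsto (fun k => ((c k : ℝ) / (b k : ℝ)) ^ (α + 1)) atTop (𝓝 (r ^ (α + 1))) :=
    ((Real.continuousAt_rpow_const r (α + 1) (Or.inl hr.ne')).tendsto).comp hbc
  have h4 := (h1.div h2 (by positivity)).mul h3
  have h5 : (α + 1)⁻¹ / (α + 1)⁻¹ * r ^ (α + 1) = r ^ (α + 1) := by
    rw [div_self (by positivity), one_mul]
  rw [h5] at h4
  apply h4.congr'
  filter_upwards [hb.eventually_ge_atTop 1, hc.eventually_ge_atTop 1] with k hbk hck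
  have hb0 : (0:ℝ) < (b k : ℝ) := by exact_mod_cast hbk
  have hc0 : (0:ℝ) < (c k : ℝ) := by exact_mod_cast hck
  have hbp : (0:ℝ) < (b k : ℝ) ^ (α + 1) := Real.rpow_pos_of_pos hb0 _
  have hcp : (0:ℝ) < (c k : ℝ) ^ (α + 1) := Real.rpow_pos_of_pos hc0 _
  have hSb : (0:ℝ) < Srpow α (b k) := Srpow_pos hbk
  rw [Real.div_rpow hc0.le hb0.le]
  simp only [Pi.div_apply]
  field_simp

/-- The upper `α`-density `d_α*(A) = limsup_m (∑_{i ∈ A ∩ [1,m]} i^α) / (∑_{i=1}^m i^α)`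
for a real `α > -1`. -/
noncomputable def upperAlphaDensity (α : ℝ) (A : Set ℕ) : ℝ :=
  Filter.limsup
    (fun m : ℕ =>
      (∑ i ∈ Finset.Icc 1 m, Set.indicator A (fun i : ℕ => (i : ℝ) ^ α) i) /
        ∑ i ∈ Finset.Icc 1 m, (i : ℝ) ^ α)
    Filter.atTop

/-- With `Aₙ = ℕ ∩ ⋃_i [2^i, 2^i(1+2^{-n}))`, for every `n ∈ ℕ` and every
real `α > -1` one has `d_α*(Aₙ) ≥ 1 - (1+2^{-n})^{-α-1}`. -/
theorem upperAlphaDensity_lower_bound (n : ℕ) (α : ℝ) (hα : -1 < α) :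
    1 - (1 + (2 : ℝ) ^ (-(n : ℝ))) ^ (-α - 1) ≤
      upperAlphaDensity α
        {m : ℕ | ∃ i : ℕ, ((2 : ℝ) ^ i ≤ (m : ℝ) ∧
          (m : ℝ) < 2 ^ i * (1 + (2 : ℝ) ^ (-(n : ℝ))))} := by
  classical
  set t : ℝ := (2 : ℝ) ^ (-(n : ℝ)) with htdef
  set A : Set ℕ := {m : ℕ | ∃ i : ℕ, ((2 : ℝ) ^ i ≤ (m : ℝ) ∧ (m : ℝ) < 2 ^ i * (1 + t))} with hAdef
  have ht : 0 < t := Real.rpow_pos_of_pos (by norm_num) _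
  have h2n : (2 : ℝ) ^ n * t = 1 := by
    rw [htdef, ← Real.rpow_natCast 2 n, ← Real.rpow_add (by norm_num)]
    simp
  set b : ℕ → ℕ := fun k => 2 ^ (k + n) + (2 ^ k - 1) with hbdef
  set c : ℕ → ℕ := fun k => 2 ^ (k + n) - 1 with hcdef
  have h1le : ∀ k : ℕ, (1:ℕ) ≤ 2 ^ k := fun k => Nat.one_le_two_pow
  have hcb : ∀ k, (b k : ℝ) = 2 ^ (k + n) + 2 ^ k - 1 := by
    intro k
    have := h1le k
    simp only [hbdef]
    push_cast [this]
    ring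
  have hcc : ∀ k, (c k : ℝ) = 2 ^ (k + n) - 1 := by
    intro k
    have := h1le (k + n)
    simp only [hcdef]
    push_cast [this]
    ring
  have h2k : ∀ k : ℕ, (2:ℝ) ^ (k + n) * t = 2 ^ k := by
    intro k
    rw [pow_add, mul_assoc, h2n, mul_one]
  -- tendsto of b, c to atTop
  have hb_at : Tendsto b atTop atTop := by
    apply tendsto_atTop_mono (fun k => ?_) tendsto_id
    have h1 := Nat.lt_two_pow_self (n := k)
    have h2 : (1:ℕ) ≤ 2 ^ (k + n) := h1le _
    simp only [hbdef, id]
    omega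
  have hc_at : Tendsto c atTop atTop := by
    apply tendsto_atTop_mono (fun k => ?_) tendsto_id
    have h1 := Nat.lt_two_pow_self (n := k)
    have h2 : 2 ^ k ≤ 2 ^ (k + n) := Nat.pow_le_pow_right (by norm_num) (by omega)
    simp only [hcdef, id]
    omega
  -- ratio c/b tends to (1+t)⁻¹
  have hu : Tendsto (fun k : ℕ => ((2:ℝ) ^ (k + n))⁻¹) atTop (𝓝 0) := by
    exact ((tendsto_pow_atTop_atTop_of_one_lt (by norm_num : (1:ℝ) < 2)).comp
      (tendsto_add_atTop_nat n)).inv_tendsto_atTop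
  have hbc : Tendsto (fun k => (c k : ℝ) / (b k : ℝ)) atTop (𝓝 ((1 + t)⁻¹)) := by
    have hnum : Tendsto (fun k : ℕ => 1 - ((2:ℝ) ^ (k + n))⁻¹) atTop (𝓝 1) := by
      have := (tendsto_const_nhds : Tendsto (fun _ : ℕ => (1:ℝ)) atTop (𝓝 1)).sub hu
      simpa using this
    have hden : Tendsto (fun k : ℕ => 1 + t - ((2:ℝ) ^ (k + n))⁻¹) atTop (𝓝 (1 + t)) := by
      have := (tendsto_const_nhds : Tendsto (fun _ : ℕ => (1+t:ℝ)) atTop (𝓝 (1+t))).sub hu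
      simpa using this
    have hlim := hnum.div hden (by positivity)
    rw [one_div] at hlim
    apply hlim.congr
    intro k
    have hP : (0:ℝ) < (2:ℝ) ^ (k + n) := by positivity
    show (1 - ((2:ℝ) ^ (k + n))⁻¹) / (1 + t - ((2:ℝ) ^ (k + n))⁻¹) = (c k : ℝ) / (b k : ℝ)
    rw [← mul_div_mul_left (c := (2:ℝ) ^ (k + n))
      (a := 1 - ((2:ℝ) ^ (k + n))⁻¹) (b := 1 + t - ((2:ℝ) ^ (k + n))⁻¹) hP.ne']
    congr 1
    · rw [hcc k]; field_simp
    · rw [hcb k, mul_sub, mul_add, h2k k, mul_one]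
      field_simp
  -- the limit of the lower bound sequence
  have hratio := Srpow_ratio_tendsto hα (r := (1 + t)⁻¹) (by positivity) hb_at hc_at hbc
  have hrexp : ((1 + t)⁻¹) ^ (α + 1) = (1 + t) ^ (-α - 1) := by
    rw [Real.inv_rpow (by positivity), ← Real.rpow_neg (by positivity)]
    congr 1
    ring
  rw [hrexp] at hratio
  set f : ℕ → ℝ := fun m =>
    (∑ i ∈ Finset.Icc 1 m, Set.indicator A (fun i : ℕ => (i : ℝ) ^ α) i) / Srpow α m with hfdef
  have hgoal : upperAlphaDensity α A = limsup f atTop := rfl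
  rw [hgoal]
  have hmem : ∀ k i : ℕ, 2 ^ (k + n) ≤ i → i ≤ b k → i ∈ A := by
    intro k i h1 h2
    refine ⟨k + n, ?_, ?_⟩
    · exact_mod_cast h1
    · have hib : (i:ℝ) ≤ (b k : ℝ) := by exact_mod_cast h2
      rw [mul_add, mul_one, h2k k]
      rw [hcb k] at hib
      linarith
  have hfb : ∀ k, 1 - Srpow α (c k) / Srpow α (b k) ≤ f (b k) := by
    intro k
    have h2kn := h1le (k + n)
    have hb1 : 1 ≤ b k := by simp only [hbdef]; omega
    have hSb := Srpow_pos (α := α) hb1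
    have hck : c k + 1 = 2 ^ (k + n) := by simp only [hcdef]; omega
    have hcbk : c k ≤ b k := by
      simp only [hcdef, hbdef]
      have := h1le k
      omega
    have hsplit : Srpow α (c k) + ∑ i ∈ Finset.Icc (2 ^ (k + n)) (b k), (i:ℝ) ^ α
        = Srpow α (b k) := by
      rw [Srpow, Srpow, show (1:ℕ) = 0 + 1 from rfl, Finset.Icc_add_one_left_eq_Ioc, Finset.Icc_add_one_left_eq_Ioc,
        ← hck, Finset.Icc_add_one_left_eq_Ioc]
      exact Finset.sum_Ioc_consecutive _ (Nat.zero_le _) hcbk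
    have hle1 : ∑ i ∈ Finset.Icc (2 ^ (k + n)) (b k), (i:ℝ) ^ α
        ≤ ∑ i ∈ Finset.Icc 1 (b k), Set.indicator A (fun i : ℕ => (i : ℝ) ^ α) i := by
      calc ∑ i ∈ Finset.Icc (2 ^ (k + n)) (b k), (i:ℝ) ^ α
          = ∑ i ∈ Finset.Icc (2 ^ (k + n)) (b k),
              Set.indicator A (fun i : ℕ => (i : ℝ) ^ α) i := by
            refine Finset.sum_congr rfl fun i hi => ?_
            rw [Finset.mem_Icc] at hi
            rw [Set.indicator_of_mem (hmem k i hi.1 hi.2)]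
        _ ≤ _ := by
            apply Finset.sum_le_sum_of_subset_of_nonneg
              (Finset.Icc_subset_Icc_left (h1le _))
            intro i _ _
            exact Set.indicator_apply_nonneg (fun _ => by positivity)
    have hstep : (Srpow α (b k) - Srpow α (c k)) / Srpow α (b k) ≤ f (b k) := by
      simp only [hfdef]
      gcongr
      linarith
    rw [sub_div, div_self hSb.ne'] at hstep
    exact hstep
  have hb1all : ∀ m, f m ≤ 1 := by
    intro m
    rcases Nat.eq_zero_or_pos m with hm | hm
    · subst hm; simp [hfdef, Srpow]
    · have hS := Srpow_pos (α := α) hm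
      rw [hfdef, div_le_one hS]
      apply Finset.sum_le_sum
      intro i _
      exact Set.indicator_apply_le' (fun _ => le_rfl) (fun _ => by positivity)
  have hbdd : IsBoundedUnder (· ≤ ·) atTop f :=
    ⟨1, eventually_map.2 (Eventually.of_forall hb1all)⟩
  have hg : Tendsto (fun k => 1 - Srpow α (c k) / Srpow α (b k)) atTop
      (𝓝 (1 - (1 + t) ^ (-α - 1))) := tendsto_const_nhds.sub hratio
  apply le_of_forall_lt_imp_le_of_dense
  intro a ha
  have hev : ∀ᶠ k in atTop, a ≤ 1 - Srpow α (c k) / Srpow α (b k) :=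
    hg.eventually (eventually_ge_nhds ha)
  have hfreq : ∃ᶠ m in atTop, a ≤ f m :=
    hb_at.frequently ((hev.mono fun k hk => hk.trans (hfb k)).frequently)
  exact le_limsup_of_frequently_le hfreq hbdd
end
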